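/- arXiv:2410.17946 — 5 statements merged into one kernel-verified Lean document; each statement's English description precedes it below -/
import Mathlib

section
/- The graded algebra V^{Diff} of differentially homogeneous polynomials in (N+1) variables is a unique factorization domain (every element admits a factorization into irreducibles, unique up to units and permutation). -/
open MvPolynomial

noncomputable section

/-- The algebra `V` of differential polynomials in `N+1` variables: polynomials in the
formal variables `X i ^(k)` for `0 ≤ i ≤ N` and `k ∈ ℕ`. -/
abbrev DiffPoly (N : ℕ) := MvPolynomial (Fin (N + 1) × ℕ) ℂ

/-- The action of an (invertible) formal power series `α ∈ ℂ[[T]]` on a differential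
polynomial, given by substituting `X i ^(k) ↦ (α X_i)^{(k)}|_{T=0}
= ∑_{j ≤ k} C(k,j) · (k-j)! · (coeff_{k-j} α) · X i ^(j)` (Leibniz rule). -/
noncomputable def diffAct (N : ℕ) (α : PowerSeries ℂ) (P : DiffPoly N) : DiffPoly N :=
  aeval (fun p : Fin (N + 1) × ℕ =>
    ∑ j ∈ Finset.range (p.2 + 1),
      C ((Nat.choose p.2 j * Nat.factorial (p.2 - j) : ℂ) * PowerSeries.coeff (p.2 - j) α)
        * X (p.1, j)) P

/-- `P` is differentially homogeneous of degree `d`. -/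
def IsDiffHomOfDeg (N : ℕ) (P : DiffPoly N) (d : ℕ) : Prop :=
  ∀ α : PowerSeries ℂ, PowerSeries.constantCoeff α ≠ 0 →
    diffAct N α P = (PowerSeries.constantCoeff α) ^ d • P

/-- `P` is differentially homogeneous (of some degree). -/
def IsDiffHom (N : ℕ) (P : DiffPoly N) : Prop := ∃ d : ℕ, IsDiffHomOfDeg N P d

namespace Stmt2Aux

variable {N : ℕ}

/-- The action as an algebra homomorphism. -/
def diffHom (N : ℕ) (α : PowerSeries ℂ) : DiffPoly N →ₐ[ℂ] DiffPoly N :=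
  aeval (fun p : Fin (N + 1) × ℕ =>
    ∑ j ∈ Finset.range (p.2 + 1),
      C ((Nat.choose p.2 j * Nat.factorial (p.2 - j) : ℂ) * PowerSeries.coeff (p.2 - j) α)
        * X (p.1, j))

lemma diffAct_eq (α : PowerSeries ℂ) (P : DiffPoly N) :
    diffAct N α P = diffHom N α P := rfl

/-- The power series with constant coefficient `1` and remaining coefficients `c`. -/
def βs (c : ℕ → ℂ) : PowerSeries ℂ := PowerSeries.mk (fun m => if m = 0 then 1 else c m)

@[simp] lemma constantCoeff_βs (c : ℕ → ℂ) :
    PowerSeries.constantCoeff (βs c) = 1 := by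
  simp [βs, ← PowerSeries.coeff_zero_eq_constantCoeff]

/-- The subalgebra of polynomials fixed by all substitutions with constant term 1. -/
def Ainv (N : ℕ) : Subalgebra ℂ (DiffPoly N) where
  carrier := {x | ∀ c : ℕ → ℂ, diffHom N (βs c) x = x}
  mul_mem' {x y} hx hy := fun c => by rw [map_mul, hx c, hy c]
  add_mem' {x y} hx hy := fun c => by rw [map_add, hx c, hy c]
  algebraMap_mem' r := fun c => by simp [diffHom]

/-- The big polynomial ring with generic coefficient variables. -/
abbrev W (N : ℕ) := MvPolynomial (ℕ ⊕ (Fin (N + 1) × ℕ)) ℂ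

/-- Inclusion of `DiffPoly N` into `W N`. -/
def ι (N : ℕ) : DiffPoly N →ₐ[ℂ] W N := rename Sum.inr

/-- Generic coefficients: `a_0 = 1`, `a_m = X (inl m)` for `m ≥ 1`. -/
def Acoef (N : ℕ) (m : ℕ) : W N := if m = 0 then 1 else X (Sum.inl m)

/-- The generic substitution homomorphism. -/
def Φ (N : ℕ) : DiffPoly N →ₐ[ℂ] W N :=
  aeval (fun p : Fin (N + 1) × ℕ =>
    ∑ j ∈ Finset.range (p.2 + 1),
      C ((Nat.choose p.2 j * Nat.factorial (p.2 - j) : ℂ)) * Acoef N (p.2 - j)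
        * X (Sum.inr (p.1, j)))

/-- Evaluation of the generic coefficients at `c`. -/
def ev (N : ℕ) (c : ℕ → ℂ) : W N →ₐ[ℂ] DiffPoly N :=
  aeval (Sum.elim (fun m => C (c m)) X)

lemma ev_comp_Φ (c : ℕ → ℂ) : (ev N c).comp (Φ N) = diffHom N (βs c) := by
  apply MvPolynomial.algHom_ext
  intro p
  simp only [AlgHom.coe_comp, Function.comp_apply, Φ, diffHom, aeval_X, map_sum, map_mul]
  refine Finset.sum_congr rfl fun j hj => ?_
  have h1 : (ev N c) (X (Sum.inr (p.1, j))) = X (p.1, j) := by simp [ev]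
  have h2 : ∀ a : ℂ, (ev N c) (C a) = C a := fun a => by
    simp [ev, algebraMap_eq]
  rw [h1, h2]
  by_cases h : p.2 - j = 0
  · simp [Acoef, h, βs, PowerSeries.coeff_mk]
  · have h3 : (ev N c) (X (Sum.inl (p.2 - j))) = C (c (p.2 - j)) := by simp [ev]
    simp [Acoef, h, h3, βs, PowerSeries.coeff_mk, C_mul, mul_assoc, mul_comm, mul_left_comm]

lemma ev_comp_ι (c : ℕ → ℂ) : (ev N c).comp (ι N) = AlgHom.id ℂ (DiffPoly N) := by
  apply MvPolynomial.algHom_ext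
  intro p
  simp [ev, ι]

lemma ev_zero_comp_Φ : (ev N (fun _ => 0)).comp (Φ N) = AlgHom.id ℂ (DiffPoly N) := by
  apply MvPolynomial.algHom_ext
  intro p
  simp only [AlgHom.coe_comp, Function.comp_apply, Φ, aeval_X, map_sum, map_mul, AlgHom.coe_id,
    id_eq]
  rw [Finset.sum_eq_single p.2]
  · have h2 : ∀ a : ℂ, (ev N (fun _ => 0)) (C a) = C a := fun a => by
      simp [ev, algebraMap_eq]
    simp [Acoef, h2, ev]
  · intro j hj hne
    have h : p.2 - j ≠ 0 := Nat.sub_ne_zero_of_lt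
      (lt_of_le_of_ne (Nat.lt_succ_iff.mp (Finset.mem_range.mp hj)) hne)
    have h3 : (ev N (fun _ => 0)) (X (Sum.inl (p.2 - j))) = 0 := by simp [ev]
    simp [Acoef, h, h3]
  · intro h
    exact absurd (Finset.self_mem_range_succ p.2) h

lemma vanish (w : W N) (h : ∀ c : ℕ → ℂ, ev N c w = 0) : w = 0 := by
  classical
  set e : W N ≃ₐ[ℂ] MvPolynomial (Fin (N + 1) × ℕ) (MvPolynomial ℕ ℂ) :=
    (renameEquiv ℂ (Equiv.sumComm ℕ (Fin (N + 1) × ℕ))).trans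
      (sumAlgEquiv ℂ (Fin (N + 1) × ℕ) ℕ) with he
  have hcomm : ∀ c : ℕ → ℂ,
      (MvPolynomial.map (MvPolynomial.eval c : MvPolynomial ℕ ℂ →+* ℂ)).comp
        (e : W N →+* MvPolynomial (Fin (N + 1) × ℕ) (MvPolynomial ℕ ℂ))
      = (ev N c : W N →+* DiffPoly N) := by
    intro c
    apply MvPolynomial.ringHom_ext
    · intro r
      simp [he, ev, sumAlgEquiv_C_inl, sumAlgEquiv_X_inl, sumAlgEquiv_X_inr,
        sumToIter_C, algebraMap_eq]
    · rintro (m | p)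
      · simp [he, ev, sumAlgEquiv_C_inl, sumAlgEquiv_X_inl, sumAlgEquiv_X_inr,
          sumToIter_Xl, sumToIter_Xr]
      · simp [he, ev, sumAlgEquiv_C_inl, sumAlgEquiv_X_inl, sumAlgEquiv_X_inr,
          sumToIter_Xl, sumToIter_Xr]
  suffices hz : e w = 0 by
    have := congrArg e.symm hz
    simpa using this
  refine MvPolynomial.ext _ _ (fun d => ?_)
  rw [coeff_zero]
  refine MvPolynomial.funext (fun c => ?_)
  rw [map_zero]
  calc MvPolynomial.eval c (coeff d (e w))
      = coeff d (MvPolynomial.map (MvPolynomial.eval c : MvPolynomial ℕ ℂ →+* ℂ) (e w)) := by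
        rw [coeff_map]
    _ = coeff d (ev N c w) := congrArg (coeff d) (RingHom.congr_fun (hcomm c) w)
    _ = 0 := by rw [h c, coeff_zero]

lemma prime_iota {p : DiffPoly N} (hp : Prime p) : Prime (ι N p) := by
  classical
  set s : Set (ℕ ⊕ (Fin (N + 1) × ℕ)) := Set.range Sum.inr with hs
  let eqv : (Fin (N + 1) × ℕ) ≃ s := Equiv.ofInjective Sum.inr Sum.inr_injective
  have h1 : Prime (renameEquiv ℂ eqv p) :=
    (MulEquiv.prime_iff (renameEquiv ℂ eqv)).2 hp
  have h2 := (prime_rename_iff (R := ℂ) s).2 h1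
  have h3 : rename (Subtype.val : s → ℕ ⊕ (Fin (N + 1) × ℕ)) (renameEquiv ℂ eqv p)
      = rename Sum.inr p := by
    rw [renameEquiv_apply, rename_rename]
    rfl
  rw [h3] at h2
  exact h2

lemma units_eq_C_fin {K : Type*} [Field K] :
    ∀ (n : ℕ) (w v : MvPolynomial (Fin n) K), w * v = 1 → ∃ c : K, w = MvPolynomial.C c := by
  intro n
  induction n with
  | zero =>
    intro w v _
    exact ⟨w.coeff 0, eq_C_of_isEmpty w⟩
  | succ n ih =>
    intro w v h
    set e := finSuccEquiv K n with he
    have h1 : e w * e v = 1 := by rw [← map_mul, h, map_one]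
    obtain ⟨r, hr, hCr⟩ := Polynomial.isUnit_iff.1 (IsUnit.of_mul_eq_one _ h1)
    obtain ⟨r', hrr'⟩ := hr.exists_right_inv
    obtain ⟨c, rfl⟩ := ih r r' hrr'
    refine ⟨c, e.injective ?_⟩
    rw [← hCr]
    have : (C c : MvPolynomial (Fin (n + 1)) K) = algebraMap K _ c := by rw [algebraMap_eq]
    rw [this, AlgEquiv.commutes]
    simp [Polynomial.algebraMap_apply, algebraMap_eq]

lemma units_eq_C {σ : Type*} {K : Type*} [Field K] {w : MvPolynomial σ K}
    (h : IsUnit w) : ∃ c : K, w = MvPolynomial.C c := by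
  classical
  obtain ⟨v, hv⟩ := h.exists_right_inv
  obtain ⟨S, w', v', rfl, rfl⟩ := exists_finset_rename₂ w v
  rw [← map_mul] at hv
  have h1 : w' * v' = 1 := by
    apply rename_injective _ Subtype.val_injective
    rw [hv, map_one]
  set e := renameEquiv K (Fintype.equivFin {x // x ∈ S}) with he
  have h2 : e w' * e v' = 1 := by rw [← map_mul, h1, map_one]
  obtain ⟨c, hc⟩ := units_eq_C_fin _ (e w') (e v') h2
  refine ⟨c, ?_⟩
  have : w' = C c := by
    apply e.injective
    rw [hc]
    simp [he]
  rw [this, rename_C]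

lemma inert (v : DiffPoly N) (hv : v ≠ 0) (s t : W N) (he : ι N v = s * t) :
    ∃ (u : W N) (m : DiffPoly N), IsUnit u ∧ s = u * ι N m := by
  revert hv s t
  refine UniqueFactorizationMonoid.induction_on_prime
    (P := fun v => v ≠ 0 → ∀ s t : W N, ι N v = s * t →
      ∃ (u : W N) (m : DiffPoly N), IsUnit u ∧ s = u * ι N m) v ?_ ?_ ?_
  · intro hv; exact absurd rfl hv
  · intro x hx _ s t he
    have : IsUnit (s * t) := by rw [← he]; exact hx.map (ι N)
    exact ⟨s, 1, isUnit_of_mul_isUnit_left this, by rw [map_one, mul_one]⟩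
  · intro a p ha hp ih hpa s t he
    rw [map_mul] at he
    have hpprime : Prime (ι N p) := prime_iota hp
    have hdvd : ι N p ∣ s * t := ⟨ι N a, he.symm⟩
    have hpne : (ι N p : W N) ≠ 0 := hpprime.ne_zero
    rcases hpprime.2.2 s t hdvd with hps | hpt
    · obtain ⟨s', rfl⟩ := hps
      have hcan : ι N a = s' * t := by
        apply mul_left_cancel₀ hpne
        rw [he]; ring
      obtain ⟨u, m, hu, rfl⟩ := ih ha s' t hcan
      exact ⟨u, p * m, hu, by rw [map_mul]; ring⟩
    · obtain ⟨t', rfl⟩ := hpt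
      have hcan : ι N a = s * t' := by
        apply mul_left_cancel₀ hpne
        rw [he]; ring
      obtain ⟨u, m, hu, rfl⟩ := ih ha s t' hcan
      exact ⟨u, m, hu, rfl⟩

lemma mem_Ainv {x : DiffPoly N} :
    x ∈ Ainv N ↔ ∀ c : ℕ → ℂ, diffHom N (βs c) x = x := Iff.rfl

lemma ev_C (c : ℕ → ℂ) (a : ℂ) : ev N c (C a) = C a := by
  simp [ev, algebraMap_eq]

lemma iota_C (a : ℂ) : ι N (C a) = C a := rename_C _ a

/-- The key saturation property. -/
lemma saturation (x y : DiffPoly N) (hxy : x * y ≠ 0) (h : x * y ∈ Ainv N) :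
    x ∈ Ainv N ∧ y ∈ Ainv N := by
  have key : ∀ a b : DiffPoly N, a * b ≠ 0 →
      (∀ c : ℕ → ℂ, diffHom N (βs c) (a * b) = a * b) →
      ∀ c : ℕ → ℂ, diffHom N (βs c) a = a := by
    intro a b hab hfix
    have hΦ : Φ N a * Φ N b = ι N (a * b) := by
      have hg : ∀ c : ℕ → ℂ, ev N c (Φ N a * Φ N b - ι N (a * b)) = 0 := by
        intro c
        rw [map_sub, map_mul]
        have e1 : ev N c (Φ N a) = diffHom N (βs c) a := AlgHom.congr_fun (ev_comp_Φ c) a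
        have e2 : ev N c (Φ N b) = diffHom N (βs c) b := AlgHom.congr_fun (ev_comp_Φ c) b
        have e3 : ev N c (ι N (a * b)) = a * b := AlgHom.congr_fun (ev_comp_ι c) (a * b)
        rw [e1, e2, e3, ← map_mul, hfix c, sub_self]
      exact sub_eq_zero.mp (vanish _ hg)
    obtain ⟨u, m, hu, hsm⟩ := inert (a * b) hab (Φ N a) (Φ N b) hΦ.symm
    obtain ⟨c₀, rfl⟩ := units_eq_C hu
    have h0 : a = C c₀ * m := by
      have h1 := AlgHom.congr_fun (ev_zero_comp_Φ (N := N)) a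
      simp only [AlgHom.coe_comp, Function.comp_apply, AlgHom.coe_id, id_eq] at h1
      rw [hsm, map_mul, ev_C] at h1
      have h2 : ev N (fun _ => 0) (ι N m) = m :=
        AlgHom.congr_fun (ev_comp_ι (fun _ => 0)) m
      rw [h2] at h1
      exact h1.symm
    have hιa : ι N a = C c₀ * ι N m := by
      rw [h0, map_mul, iota_C]
    intro c
    have e1 : ev N c (Φ N a) = diffHom N (βs c) a := AlgHom.congr_fun (ev_comp_Φ c) a
    have e4 : ev N c (ι N a) = a := AlgHom.congr_fun (ev_comp_ι c) a
    rw [← e1, hsm, ← hιa, e4]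
  refine ⟨mem_Ainv.mpr (key x y hxy (mem_Ainv.mp h)), mem_Ainv.mpr (key y x ?_ ?_)⟩
  · rwa [mul_comm]
  · intro c; rw [mul_comm]; exact mem_Ainv.mp h c

lemma diffHom_C_eq (a : ℂ) :
    diffHom N (PowerSeries.C a) =
      aeval (fun v : Fin (N + 1) × ℕ => C a * X v) := by
  apply MvPolynomial.algHom_ext
  intro p
  simp only [diffHom, aeval_X]
  rw [Finset.sum_eq_single p.2]
  · simp [PowerSeries.coeff_C]
  · intro j hj hne
    have h : p.2 - j ≠ 0 := Nat.sub_ne_zero_of_lt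
      (lt_of_le_of_ne (Nat.lt_succ_iff.mp (Finset.mem_range.mp hj)) hne)
    simp [PowerSeries.coeff_C, h]
  · intro h
    exact absurd (Finset.self_mem_range_succ p.2) h

/-- Scaling: `diffHom` of a constant power series on a homogeneous polynomial. -/
lemma diffHom_const {P : DiffPoly N} {e : ℕ} (hP : P.IsHomogeneous e) (a : ℂ) :
    diffHom N (PowerSeries.C a) P = a ^ e • P := by
  rw [diffHom_C_eq]
  conv_lhs => rw [P.as_sum]
  conv_rhs => rw [P.as_sum]
  rw [map_sum, Finset.smul_sum]
  refine Finset.sum_congr rfl fun d hd => ?_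
  have hdeg : ∑ v ∈ d.support, d v = e := by
    have h1 := hP (mem_support_iff.mp hd)
    rw [show (Finsupp.weight (1 : Fin (N + 1) × ℕ → ℕ)) = Finsupp.weight (fun _ => 1) from rfl,
      ← Finsupp.degree_eq_weight_one] at h1
    exact h1
  rw [aeval_monomial]
  have hprod : (d.prod fun v k => (C a * X v) ^ k)
      = C (a ^ e) * d.prod fun v k => (X v : DiffPoly N) ^ k := by
    rw [Finsupp.prod, Finsupp.prod]
    simp_rw [mul_pow, ← C_pow]
    rw [Finset.prod_mul_distrib, ← map_prod C (fun v => a ^ d v) d.support,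
      Finset.prod_pow_eq_pow_sum, hdeg]
  rw [hprod, smul_eq_C_mul, monomial_eq, algebraMap_eq]
  ring

lemma diffHom_isHomogeneous {P : DiffPoly N} {e : ℕ} (hP : P.IsHomogeneous e)
    (α : PowerSeries ℂ) : (diffHom N α P).IsHomogeneous e := by
  have := hP.aeval (fun p : Fin (N + 1) × ℕ =>
    ∑ j ∈ Finset.range (p.2 + 1),
      C ((Nat.choose p.2 j * Nat.factorial (p.2 - j) : ℂ) * PowerSeries.coeff (p.2 - j) α)
        * X (p.1, j)) (n := 1) (fun p => ?_)
  · simpa [diffHom] using this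
  · rw [← mem_homogeneousSubmodule]
    apply Submodule.sum_mem
    intro j hj
    rw [mem_homogeneousSubmodule]
    exact isHomogeneous_C_mul_X _ _

lemma diffHom_factor (α : PowerSeries ℂ) (hα : PowerSeries.constantCoeff α ≠ 0)
    (P : DiffPoly N) :
    diffHom N α P =
      diffHom N (PowerSeries.C (PowerSeries.constantCoeff α))
        (diffHom N (βs fun m => PowerSeries.coeff m ((PowerSeries.constantCoeff α)⁻¹ • α)) P)
      := by
  set a := PowerSeries.constantCoeff α with ha
  have hcomp : diffHom N α = (diffHom N (PowerSeries.C a)).comp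
      (diffHom N (βs fun m => PowerSeries.coeff m (a⁻¹ • α))) := by
    apply MvPolynomial.algHom_ext
    intro p
    rw [AlgHom.coe_comp, Function.comp_apply, diffHom_C_eq]
    simp only [diffHom, aeval_X, map_sum, map_mul, aeval_C, algebraMap_eq]
    refine Finset.sum_congr rfl fun j hj => ?_
    by_cases h : p.2 - j = 0
    · have hc : PowerSeries.coeff (p.2 - j) (βs fun m => PowerSeries.coeff m (a⁻¹ • α))
          = 1 := by simp [h, βs, PowerSeries.coeff_mk]
      have hc2 : PowerSeries.coeff (p.2 - j) α = a := by
        rw [h, ha, PowerSeries.coeff_zero_eq_constantCoeff]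
      rw [hc, hc2]
      simp only [C_1, mul_one]
      ring
    · have hc : PowerSeries.coeff (p.2 - j) (βs fun m => PowerSeries.coeff m (a⁻¹ • α))
          = a⁻¹ * PowerSeries.coeff (p.2 - j) α := by
        simp [h, βs, PowerSeries.coeff_mk, PowerSeries.coeff_smul, smul_eq_mul]
      rw [hc, ← C_mul, ← C_mul, ← C_mul]
      have : (Nat.choose p.2 j * Nat.factorial (p.2 - j) : ℂ) *
          (a⁻¹ * PowerSeries.coeff (p.2 - j) α) * a
          = (Nat.choose p.2 j * Nat.factorial (p.2 - j) : ℂ) *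
            PowerSeries.coeff (p.2 - j) α := by
        field_simp
      rw [mul_comm (C _) (X _), ← mul_assoc, ← C_mul, this]
      ring
  rw [hcomp]
  rfl

lemma comp_fix {x : DiffPoly N} (hx : ∀ c : ℕ → ℂ, diffHom N (βs c) x = x) (e : ℕ)
    (c : ℕ → ℂ) :
    diffHom N (βs c) (homogeneousComponent e x) = homogeneousComponent e x := by
  by_cases he : e ≤ x.totalDegree
  · have h3 : diffHom N (βs c) x
        = ∑ i ∈ Finset.range (x.totalDegree + 1),
            diffHom N (βs c) (homogeneousComponent i x) := by
      conv_lhs => rw [← sum_homogeneousComponent x]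
      rw [map_sum]
    have h4 := congrArg (homogeneousComponent e) ((h3.symm).trans (hx c))
    rw [map_sum] at h4
    rw [Finset.sum_congr rfl (fun i _ => homogeneousComponent_of_mem
      ((mem_homogeneousSubmodule _ _).mpr (diffHom_isHomogeneous
        (homogeneousComponent_isHomogeneous i x) _)))] at h4
    rw [Finset.sum_ite_eq] at h4
    rw [if_pos (Finset.mem_range.mpr (Nat.lt_succ_of_le he))] at h4
    exact h4
  · rw [homogeneousComponent_eq_zero _ _ (lt_of_not_ge he), map_zero]

lemma adjoin_eq : Algebra.adjoin ℂ {P : DiffPoly N | IsDiffHom N P} = Ainv N := by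
  apply le_antisymm
  · apply Algebra.adjoin_le
    rintro P ⟨d, hP⟩
    intro c
    have h1 := hP (βs c) (by rw [constantCoeff_βs]; exact one_ne_zero)
    rw [diffAct_eq] at h1
    rw [h1, constantCoeff_βs, one_pow, one_smul]
  · intro x hx
    have hx' : ∀ c : ℕ → ℂ, diffHom N (βs c) x = x := mem_Ainv.mp hx
    have hsum := sum_homogeneousComponent x
    rw [← hsum]
    apply Subalgebra.sum_mem
    intro e _
    apply Algebra.subset_adjoin
    refine ⟨e, fun α hα => ?_⟩
    rw [diffAct_eq, diffHom_factor α hα, comp_fix hx' e,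
      diffHom_const (homogeneousComponent_isHomogeneous e x)]

lemma ufd_of_saturated {R : Type*} [CommRing R] [IsDomain R] [Algebra ℂ R]
    [UniqueFactorizationMonoid R] (A : Subalgebra ℂ R)
    (hsat : ∀ x y : R, x * y ∈ A → x * y ≠ 0 → x ∈ A ∧ y ∈ A) :
    UniqueFactorizationMonoid ↥A := by
  have hunit : ∀ a : A, IsUnit (a : R) → IsUnit a := by
    intro a ha
    obtain ⟨b, hb⟩ := ha.exists_right_inv
    have h1 : (a : R) * b ∈ A := by rw [hb]; exact one_mem A
    have h1' : (a : R) * b ≠ 0 := by rw [hb]; exact one_ne_zero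
    obtain ⟨-, hbA⟩ := hsat _ _ h1 h1'
    exact IsUnit.of_mul_eq_one ⟨b, hbA⟩ (Subtype.ext hb)
  have hdnu : ∀ a b : A, DvdNotUnit a b → DvdNotUnit (a : R) (b : R) := by
    rintro a b ⟨ha0, c, hc, he⟩
    refine ⟨fun h => ha0 (Subtype.ext h), c, fun h => hc (hunit c h), ?_⟩
    exact congrArg Subtype.val he
  haveI hwf : IsWellFounded ↥A DvdNotUnit := by
    constructor
    have wf : WellFounded (DvdNotUnit : R → R → Prop) := IsWellFounded.wf
    exact Subrelation.wf (fun {a b} h => hdnu a b h) (InvImage.wf (fun a : A => (a : R)) wf)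
  refine { hwf with irreducible_iff_prime := ?_ }
  intro p
  constructor
  · intro hirr
    have hp0 : (p : R) ≠ 0 := fun h => hirr.ne_zero (Subtype.ext h)
    have hirrR : Irreducible (p : R) := by
      constructor
      · intro hu; exact hirr.not_isUnit (hunit p hu)
      · intro x y hxy
        have hmem : x * y ∈ A := by rw [← hxy]; exact p.2
        have hne : x * y ≠ 0 := by rw [← hxy]; exact hp0
        obtain ⟨hxA, hyA⟩ := hsat x y hmem hne
        rcases hirr.isUnit_or_isUnit (Subtype.ext hxy : p = ⟨x, hxA⟩ * ⟨y, hyA⟩) with h | h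
        · exact Or.inl (h.map A.val)
        · exact Or.inr (h.map A.val)
    have hprimeR : Prime (p : R) := UniqueFactorizationMonoid.irreducible_iff_prime.mp hirrR
    refine ⟨fun h => hp0 (by rw [h]; rfl), fun h => hprimeR.not_isUnit (h.map A.val), ?_⟩
    intro a b hab
    obtain ⟨c, hc⟩ := hab
    have habR : (p : R) ∣ (a : R) * b := ⟨c, congrArg Subtype.val hc⟩
    have hside : ∀ z : A, (p : R) ∣ (z : R) → p ∣ z := by
      intro z hz
      obtain ⟨d, hd⟩ := hz
      by_cases hz0 : (z : R) = 0
      · have : z = 0 := Subtype.ext hz0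
        rw [this]; exact dvd_zero p
      · have hmem : (p : R) * d ∈ A := by rw [← hd]; exact z.2
        obtain ⟨-, hdA⟩ := hsat _ _ hmem (by rw [← hd]; exact hz0)
        exact ⟨⟨d, hdA⟩, Subtype.ext hd⟩
    rcases hprimeR.2.2 _ _ habR with h | h
    · exact Or.inl (hside a h)
    · exact Or.inr (hside b h)
  · exact Prime.irreducible

end Stmt2Aux

/-- The graded algebra `V^{Diff}` of differentially homogeneous
polynomials in `N+1` variables (the subalgebra of `V` generated by the differentially
homogeneous polynomials, which is spanned by them) is a unique factorization domain. -/
theorem stmt2 (N : ℕ) :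
    UniqueFactorizationMonoid ↥(Algebra.adjoin ℂ {P : DiffPoly N | IsDiffHom N P}) := by
  rw [Stmt2Aux.adjoin_eq]
  exact Stmt2Aux.ufd_of_saturated (Stmt2Aux.Ainv N) (fun x y h hne => Stmt2Aux.saturation x y hne h)
end
end

section
/- For d ≥ 1, the set Σ_d of tuples (α_1,...,α_d) ∈ ℕ^d such that there exists an index i with α_i = 0 and the (d-1)-tuple obtained by deleting α_i satisfies the constraint that its j-th entry is at most j-1 for all 1 ≤ j ≤ d-1, has cardinality d!/2 (for d ≥ 2). -/
open Finset

namespace Stmt7Aux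

variable (d : ℕ)

/-- The predicate defining the set. -/
def P (α : Fin d → ℕ) : Prop := ∃ i : Fin d, α i = 0 ∧
    ∀ j : Fin d, j ≠ i →
      α j ≤ (if (j : ℕ) < (i : ℕ) then (j : ℕ) else (j : ℕ) - 1)

/-- The ambient finset of bounded tuples. -/
noncomputable def A : Finset (Fin d → ℕ) :=
  Fintype.piFinset (fun j : Fin d => Finset.range ((j : ℕ) + 1))

/-- The set of "critical" indices. -/
noncomputable def B (α : Fin d → ℕ) : Finset (Fin d) :=
  Finset.univ.filter (fun j : Fin d => (j : ℕ) ≠ 0 ∧ (α j = 0 ∨ α j = (j : ℕ)))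

lemma memA (α : Fin d → ℕ) : α ∈ A d ↔ ∀ j : Fin d, α j ≤ (j : ℕ) := by
  simp [A, Nat.lt_succ_iff]

lemma memB (α : Fin d → ℕ) (j : Fin d) :
    j ∈ B d α ↔ (j : ℕ) ≠ 0 ∧ (α j = 0 ∨ α j = (j : ℕ)) := by
  simp [B]

variable {d}

lemma Bne (hd : 2 ≤ d) {α : Fin d → ℕ} (hα : α ∈ A d) : (B d α).Nonempty := by
  refine ⟨⟨1, by omega⟩, ?_⟩
  have h1 := (memA d α).1 hα ⟨1, by omega⟩
  rw [memB]
  simp only [Fin.val_mk] at h1 ⊢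
  omega

lemma key (hd : 2 ≤ d) {α : Fin d → ℕ} (hα : α ∈ A d) :
    P d α ↔ α ((B d α).max' (Bne hd hα)) = 0 := by
  set m := (B d α).max' (Bne hd hα) with hm
  have hmB : m ∈ B d α := Finset.max'_mem _ _
  rw [memB] at hmB
  constructor
  · rintro ⟨i, hi0, hcond⟩
    by_contra h0
    have hαm : α m = (m : ℕ) := by tauto
    have hmi : m ≠ i := by
      intro h; rw [h, hi0] at hαm; omega
    have hc := hcond m hmi
    split_ifs at hc with hlt
    · -- m < i : then i ∈ B, contradicting maximality
      have hiB : i ∈ B d α := by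
        rw [memB]
        exact ⟨by omega, Or.inl hi0⟩
      have := Finset.le_max' _ i hiB
      rw [← hm] at this
      have : (i : ℕ) ≤ (m : ℕ) := this
      omega
    · omega
  · intro h0
    refine ⟨m, h0, ?_⟩
    intro j hj
    have hjle := (memA d α).1 hα j
    split_ifs with hlt
    · exact hjle
    · have hne : (j : ℕ) ≠ (m : ℕ) := fun h => hj (Fin.ext h)
      have hgt : (m : ℕ) < (j : ℕ) := by omega
      have hjB : j ∉ B d α := by
        intro hjB
        have := Finset.le_max' _ j hjB
        rw [← hm] at this
        have : (j : ℕ) ≤ (m : ℕ) := this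
        omega
      rw [memB] at hjB
      push_neg at hjB
      have := hjB (by omega)
      omega

/-- The involution: flip the value at the maximal critical index between 0 and m. -/
noncomputable def f (α : Fin d → ℕ) : Fin d → ℕ :=
  if h : (B d α).Nonempty then
    Function.update α ((B d α).max' h)
      (if α ((B d α).max' h) = 0 then (((B d α).max' h : Fin d) : ℕ) else 0)
  else α

lemma f_eq (hd : 2 ≤ d) {α : Fin d → ℕ} (hα : α ∈ A d) :
    f α = Function.update α ((B d α).max' (Bne hd hα))
      (if α ((B d α).max' (Bne hd hα)) = 0 then (((B d α).max' (Bne hd hα) : Fin d) : ℕ) else 0) := by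
  rw [f, dif_pos (Bne hd hα)]

lemma f_memA (hd : 2 ≤ d) {α : Fin d → ℕ} (hα : α ∈ A d) : f α ∈ A d := by
  rw [f_eq hd hα, memA]
  intro j
  rcases eq_or_ne j ((B d α).max' (Bne hd hα)) with h | h
  · subst h; rw [Function.update_self]; split_ifs <;> omega
  · rw [Function.update_of_ne h]
    exact (memA d α).1 hα j

lemma B_f (hd : 2 ≤ d) {α : Fin d → ℕ} (hα : α ∈ A d) : B d (f α) = B d α := by
  set m := (B d α).max' (Bne hd hα) with hm
  have hmB : m ∈ B d α := Finset.max'_mem _ _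
  rw [memB] at hmB
  ext j
  rw [memB, memB]
  rcases eq_or_ne j m with h | h
  · subst h
    rw [f_eq hd hα, Function.update_self]
    constructor
    · intro _; exact hmB
    · intro _; refine ⟨hmB.1, ?_⟩
      split_ifs <;> tauto
  · rw [f_eq hd hα, Function.update_of_ne h]

lemma f_f (hd : 2 ≤ d) {α : Fin d → ℕ} (hα : α ∈ A d) : f (f α) = α := by
  have hfa : f α ∈ A d := f_memA hd hα
  have hB : B d (f α) = B d α := B_f hd hα
  set m := (B d α).max' (Bne hd hα) with hm
  have hmB : m ∈ B d α := Finset.max'_mem _ _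
  rw [memB] at hmB
  have hm' : (B d (f α)).max' (Bne hd hfa) = m := by
    rw [hm]; congr 1
  rw [f_eq hd hfa, hm', f_eq hd hα, ← hm]
  rw [Function.update_self]
  funext j
  rcases eq_or_ne j m with h | h
  · subst h
    rw [Function.update_self]
    rcases hmB.2 with h | h
    · rw [if_pos h, if_neg hmB.1]; exact h.symm
    · have h0 : α m ≠ 0 := by rw [h]; exact hmB.1
      rw [if_neg h0, if_pos rfl]; exact h.symm
  · rw [Function.update_of_ne h, Function.update_of_ne h]

lemma f_P (hd : 2 ≤ d) {α : Fin d → ℕ} (hα : α ∈ A d) : P d (f α) ↔ ¬ P d α := by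
  have hfa : f α ∈ A d := f_memA hd hα
  have hB : B d (f α) = B d α := B_f hd hα
  set m := (B d α).max' (Bne hd hα) with hm
  have hmB : m ∈ B d α := Finset.max'_mem _ _
  rw [memB] at hmB
  have hm' : (B d (f α)).max' (Bne hd hfa) = m := by
    rw [hm]; congr 1
  rw [key hd hfa, key hd hα, hm', ← hm, f_eq hd hα, ← hm, Function.update_self]
  split_ifs with h1
  · simp [h1]; omega
  · simp [h1]

end Stmt7Aux

/-- For `d ≥ 2`, the set `Σ_d` of tuples `(α_1, …, α_d) ∈ ℕ^d` such
that there exists an index `i` with `α_i = 0` and the `(d-1)`-tuple obtained by deleting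
the `i`-th entry has its `j`-th entry at most `j - 1` (1-indexed; i.e. the entry in
0-indexed position `p` is at most `p`) has cardinality `d!/2`.
(Here, for `j ≠ i`, the 0-indexed position of `α_j` in the deleted tuple is `j` if
`j < i` and `j - 1` if `j > i`.) -/
theorem stmt7 (d : ℕ) (hd : 2 ≤ d) :
    Set.ncard {α : Fin d → ℕ | ∃ i : Fin d, α i = 0 ∧
        ∀ j : Fin d, j ≠ i →
          α j ≤ (if (j : ℕ) < (i : ℕ) then (j : ℕ) else (j : ℕ) - 1)}
      = Nat.factorial d / 2 := by
  classical
  open Stmt7Aux in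
  have hbound : ∀ α, P d α → α ∈ A d := by
    rintro α ⟨i, hi, h⟩
    rw [memA]
    intro j
    by_cases hji : j = i
    · subst hji; omega
    · have := h j hji
      split_ifs at this <;> omega
  have hset : {α : Fin d → ℕ | ∃ i : Fin d, α i = 0 ∧
        ∀ j : Fin d, j ≠ i →
          α j ≤ (if (j : ℕ) < (i : ℕ) then (j : ℕ) else (j : ℕ) - 1)}
      = ↑((A d).filter (P d)) := by
    ext α
    simp only [Finset.coe_filter, Set.mem_setOf_eq]
    constructor
    · intro h; exact ⟨hbound α h, h⟩
    · intro h; exact h.2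
  rw [hset, Set.ncard_coe_finset]
  have hcards : ((A d).filter (P d)).card = ((A d).filter (fun α => ¬ P d α)).card := by
    refine Finset.card_nbij' Stmt7Aux.f Stmt7Aux.f ?_ ?_ ?_ ?_
    · intro α hα
      rw [Finset.mem_coe, Finset.mem_filter] at hα ⊢
      exact ⟨f_memA hd hα.1, fun hp => ((f_P hd hα.1).1 hp) hα.2⟩
    · intro α hα
      rw [Finset.mem_coe, Finset.mem_filter] at hα ⊢
      exact ⟨f_memA hd hα.1, (f_P hd hα.1).mpr hα.2⟩
    · intro α hα
      rw [Finset.mem_coe, Finset.mem_filter] at hα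
      exact f_f hd hα.1
    · intro α hα
      rw [Finset.mem_coe, Finset.mem_filter] at hα
      exact f_f hd hα.1
  have hsum := Finset.card_filter_add_card_filter_not (s := A d) (P d)
  have hAcard : (A d).card = Nat.factorial d := by
    rw [A, Fintype.card_piFinset]
    simp only [Finset.card_range]
    rw [Fin.prod_univ_eq_prod_range (fun i => i + 1) d]
    exact Finset.prod_range_add_one_eq_factorial d
  omega
end

section
/- For N ≥ 1 and d ≥ 2, the set of combinatorial data α = (α_0,...,α_N), where each α_i is either empty or a strictly increasing tuple (α_{i,1} < ⋯ < α_{i,r_i}) of naturals with α_{i,r_i} < r_0 + ⋯ + r_i, the total length r_0 + ⋯ + r_N equals d, and there exists an index i with α_{i,1} = 0, α_{i,r_i} < r_0+⋯+r_i - 1 if r_i > 1, and α_{j,r_j} < r_0+⋯+r_j - 1 for all j > i (vacuously if α_j is empty), has cardinality (N(N+1)/2)·(N+1)^{d-2}. -/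
namespace Stmt11

abbrev Cfg (N : ℕ) := Fin (N+1) → List ℕ

variable {N : ℕ}

def S (α : Cfg N) (i : Fin (N+1)) : ℕ := ∑ t ∈ Finset.Iic i, (α t).length

def W (α : Cfg N) (i : Fin (N+1)) : Prop :=
  (α i).head? = some 0 ∧
  (1 < (α i).length → ∀ x : ℕ, (α i).getLast? = some x → x + 1 < S α i) ∧
  (∀ j, i < j → ∀ x : ℕ, (α j).getLast? = some x → x + 1 < S α j)

def P (N d : ℕ) : Set (Cfg N) :=
  {α | (∀ i, List.Pairwise (· < ·) (α i)) ∧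
    (∀ i, ∀ x ∈ α i, x < S α i) ∧
    (∑ i, (α i).length = d) ∧
    (∃ i, W α i)}

/-! ### list helpers -/

lemma decomp {l : List ℕ} {y : ℕ} (hy : l.getLast? = some y) :
    l.dropLast ++ [y] = l := by
  rcases l.eq_nil_or_concat with rfl | ⟨l', a, rfl⟩
  · simp at hy
  · rw [List.concat_eq_append, List.getLast?_concat] at hy
    obtain rfl : a = y := by injection hy
    simp

lemma mem_dropLast_lt {l : List ℕ} (hs : l.Pairwise (· < ·)) {x y : ℕ}
    (hx : x ∈ l.dropLast) (hy : l.getLast? = some y) : x < y := by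
  have h := decomp hy
  rw [← h] at hs
  exact (List.pairwise_append.mp hs).2.2 x hx y (by simp)

lemma mem_le_getLast {l : List ℕ} (hs : l.Pairwise (· < ·)) {x y : ℕ}
    (hx : x ∈ l) (hy : l.getLast? = some y) : x ≤ y := by
  rw [← decomp hy, List.mem_append] at hx
  rcases hx with hx | hx
  · exact (mem_dropLast_lt hs hx hy).le
  · simp at hx; omega

lemma head_add_length {l : List ℕ} (hs : l.Pairwise (· < ·)) {h y : ℕ}
    (hh : l.head? = some h) (hy : l.getLast? = some y) : h + l.length ≤ y + 1 := by
  induction l generalizing h with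
  | nil => simp at hh
  | cons a t ih =>
    have hha : a = h := by simpa using hh
    subst hha
    cases t with
    | nil =>
      obtain rfl : y = a := by simpa using hy.symm
      simp
    | cons b t' =>
      rw [List.getLast?_cons_cons] at hy
      have hs' := (List.pairwise_cons.mp hs).2
      have hab : a < b := (List.pairwise_cons.mp hs).1 b (by simp)
      have := ih hs' (h := b) rfl hy
      simp only [List.length_cons] at this ⊢
      omega

lemma singleton_of {l : List ℕ} (h1 : l.length = 1) (h0 : l.head? = some 0) : l = [0] := by
  cases l with
  | nil => simp at h1
  | cons a t =>
    cases t with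
    | nil =>
      obtain rfl : a = 0 := by simpa using h0
      rfl
    | cons b t' => simp at h1

lemma head?_dropLast {l : List ℕ} (h : 2 ≤ l.length) : l.dropLast.head? = l.head? := by
  cases l with
  | nil => simp
  | cons a t =>
    cases t with
    | nil => simp at h
    | cons b t' => simp [List.dropLast_cons₂]

/-! ### sums -/

lemma S_mono (α : Cfg N) {i j : Fin (N+1)} (h : i ≤ j) : S α i ≤ S α j :=
  Finset.sum_le_sum_of_subset (Finset.Iic_subset_Iic.mpr h)

lemma length_le_S (α : Cfg N) (i : Fin (N+1)) : (α i).length ≤ S α i :=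
  Finset.single_le_sum (f := fun t => (α t).length) (fun _ _ => Nat.zero_le _)
    (Finset.mem_Iic.mpr le_rfl)

lemma S_append (α : Cfg N) (c : Fin (N+1)) (L : List ℕ) (j : Fin (N+1)) :
    S (Function.update α c (α c ++ L)) j = S α j + if c ≤ j then L.length else 0 := by
  classical
  unfold S
  have hcong : ∀ t ∈ Finset.Iic j, (Function.update α c (α c ++ L) t).length
      = (α t).length + if t = c then L.length else 0 := by
    intro t _
    by_cases h : t = c
    · subst h; simp
    · simp [Function.update_of_ne h, h]
  rw [Finset.sum_congr rfl hcong, Finset.sum_add_distrib,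
    Finset.sum_ite_eq' (Finset.Iic j) c (fun _ => L.length)]
  by_cases hcj : c ≤ j
  · simp [Finset.mem_Iic.mpr hcj, hcj]
  · have : c ∉ Finset.Iic j := by simpa [Finset.mem_Iic] using hcj
    simp [this, hcj]

lemma total_append (α : Cfg N) (c : Fin (N+1)) (L : List ℕ) :
    ∑ i, (Function.update α c (α c ++ L) i).length = (∑ i, (α i).length) + L.length := by
  classical
  have hcong : ∀ t ∈ (Finset.univ : Finset (Fin (N+1))), (Function.update α c (α c ++ L) t).length
      = (α t).length + if t = c then L.length else 0 := by
    intro t _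
    by_cases h : t = c
    · subst h; simp
    · simp [Function.update_of_ne h, h]
  rw [Finset.sum_congr rfl hcong, Finset.sum_add_distrib,
    Finset.sum_ite_eq' Finset.univ c (fun _ => L.length)]
  simp

lemma Iic_split {i k : Fin (N+1)} (h : i ≤ k) :
    Finset.Iic k = Finset.Iic i ∪ Finset.Ioc i k := by
  ext t
  simp only [Finset.mem_Iic, Finset.mem_union, Finset.mem_Ioc, Fin.le_def, Fin.lt_def]
  omega

lemma S_of_min_gt {α : Cfg N} {i k : Fin (N+1)} (hik : i < k)
    (hmid : ∀ t, i < t → t < k → α t = []) : S α k = S α i + (α k).length := by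
  rw [S, Iic_split hik.le, Finset.sum_union, S]
  · congr 1
    rw [Finset.sum_eq_single_of_mem k (Finset.mem_Ioc.mpr ⟨hik, le_rfl⟩)]
    intro t ht htk
    rw [hmid t (Finset.mem_Ioc.mp ht).1 (lt_of_le_of_ne (Finset.mem_Ioc.mp ht).2 htk)]
    rfl
  · rw [Finset.disjoint_left]
    intro t ht ht'
    rw [Finset.mem_Iic] at ht
    exact absurd (Finset.mem_Ioc.mp ht').1 (not_lt.mpr ht)

/-! ### istar and sel -/

noncomputable def wits (α : Cfg N) : Finset (Fin (N+1)) :=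
  @Finset.filter _ (fun i => W α i) (Classical.decPred _) Finset.univ

lemma mem_wits {α : Cfg N} {i : Fin (N+1)} : i ∈ wits α ↔ W α i := by
  simp [wits]

noncomputable def istar (α : Cfg N) : Fin (N+1) :=
  if h : (wits α).Nonempty then (wits α).max' h else 0

lemma W_istar {α : Cfg N} (h : ∃ i, W α i) : W α (istar α) := by
  obtain ⟨i, hi⟩ := h
  have hne : (wits α).Nonempty := ⟨i, mem_wits.mpr hi⟩
  rw [istar, dif_pos hne]
  exact mem_wits.mp ((wits α).max'_mem hne)

lemma le_istar {α : Cfg N} {i : Fin (N+1)} (h : W α i) : i ≤ istar α := by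
  have hne : (wits α).Nonempty := ⟨i, mem_wits.mpr h⟩
  rw [istar, dif_pos hne]
  exact Finset.le_max' _ _ (mem_wits.mpr h)

noncomputable def nearF (b : Cfg N) : Finset (Fin (N+1)) :=
  @Finset.filter _ (fun j => istar b ≤ j ∧ ∃ y, (b j).getLast? = some y ∧ y + 2 = S b j)
    (Classical.decPred _) Finset.univ

noncomputable def fullF (b : Cfg N) : Finset (Fin (N+1)) :=
  @Finset.filter _ (fun j => ∃ y, (b j).getLast? = some y ∧ y + 1 = S b j)
    (Classical.decPred _) Finset.univ

lemma mem_nearF {b : Cfg N} {j} : j ∈ nearF b ↔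
    istar b ≤ j ∧ ∃ y, (b j).getLast? = some y ∧ y + 2 = S b j := by simp [nearF]

lemma mem_fullF {b : Cfg N} {j} : j ∈ fullF b ↔
    ∃ y, (b j).getLast? = some y ∧ y + 1 = S b j := by simp [fullF]

noncomputable def sel (b : Cfg N) : Fin (N+1) :=
  if h : (nearF b).Nonempty then (nearF b).max' h
  else if h2 : (fullF b).Nonempty then (fullF b).max' h2 else 0

noncomputable def ins (α : Cfg N) (c : Fin (N+1)) : Cfg N :=
  Function.update α c (α c ++ [if c < istar α then S α c else S α c - 1])

noncomputable def del (b : Cfg N) : Cfg N :=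
  Function.update b (sel b) ((b (sel b)).dropLast)

/-! ### structure lemmas -/

lemma W.ne_nil {α : Cfg N} {i : Fin (N+1)} (h : W α i) : α i ≠ [] := by
  intro he
  have h1 := h.1
  rw [he] at h1
  simp at h1

lemma nextwit {α : Cfg N} (hs : ∀ i, (α i).Pairwise (· < ·)) {i k : Fin (N+1)}
    (hW : W α i) (hik : i < k) {y : ℕ} (hy : (α k).getLast? = some y)
    (hyr : y + 1 ≤ (α k).length) : W α k := by
  have hne : α k ≠ [] := by intro h; rw [h] at hy; simp at hy
  have hh : (α k).head? = some ((α k).head hne) := List.head?_eq_head hne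
  have hlen := head_add_length (hs k) hh hy
  have hk1 : 1 ≤ (α k).length := List.length_pos_iff.mpr hne
  have h0 : (α k).head hne = 0 := by omega
  have hSk : (α i).length + (α k).length ≤ S α k := by
    have hsub : ({i, k} : Finset (Fin (N+1))) ⊆ Finset.Iic k := by
      intro t ht
      simp only [Finset.mem_insert, Finset.mem_singleton] at ht
      rcases ht with rfl | rfl
      · exact Finset.mem_Iic.mpr hik.le
      · exact Finset.mem_Iic.mpr le_rfl
    calc (α i).length + (α k).length
        = ∑ t ∈ ({i, k} : Finset (Fin (N+1))), (α t).length :=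
          (Finset.sum_pair (f := fun t => (α t).length) (ne_of_lt hik)).symm
      _ ≤ S α k := Finset.sum_le_sum_of_subset hsub
  have hi1 : 1 ≤ (α i).length := List.length_pos_iff.mpr hW.ne_nil
  refine ⟨by rw [hh, h0], ?_, ?_⟩
  · intro _ x hx
    have hxy : x = y := by rw [hy] at hx; exact (Option.some.inj hx).symm
    omega
  · intro j hj x hx
    exact hW.2.2 j (hik.trans hj) x hx

lemma S_istar_ge2 {d : ℕ} {α : Cfg N} (hα : α ∈ P N d) (hd : 2 ≤ d) :
    2 ≤ S α (istar α) := by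
  obtain ⟨hs, hC2, hC3, hex⟩ := hα
  have hW := W_istar hex
  set i := istar α with hi
  have hi1 : 1 ≤ (α i).length := List.length_pos_iff.mpr hW.ne_nil
  have hS1 : 1 ≤ S α i := le_trans hi1 (length_le_S α i)
  by_contra hlt
  have hS : S α i = 1 := by omega
  have hex2 : ∃ k, i < k ∧ α k ≠ [] := by
    by_contra hno
    push_neg at hno
    have htot : ∑ t, (α t).length = S α i := by
      rw [S]
      symm
      apply Finset.sum_subset (Finset.subset_univ _)
      intro t _ ht
      have hit : i < t := by
        rcases lt_or_ge i t with h | h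
        · exact h
        · exact absurd (Finset.mem_Iic.mpr h) ht
      rw [hno t hit]
      rfl
    omega
  classical
  set F := Finset.univ.filter (fun k => i < k ∧ α k ≠ []) with hF
  have hFne : F.Nonempty := by
    obtain ⟨k, hk⟩ := hex2
    exact ⟨k, by simp [hF, hk.1, hk.2]⟩
  set k := F.min' hFne with hk
  have hkmem := F.min'_mem hFne
  obtain ⟨-, hik, hkne⟩ := Finset.mem_filter.mp hkmem
  have hmid : ∀ t, i < t → t < k → α t = [] := by
    intro t h1 h2
    by_contra hne2
    have : t ∈ F := by simp [hF, h1, hne2]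
    exact absurd (F.min'_le t this) (not_le.mpr h2)
  have hSk : S α k = S α i + (α k).length := S_of_min_gt hik hmid
  obtain ⟨y, hy⟩ : ∃ y, (α k).getLast? = some y :=
    Option.isSome_iff_exists.mp (List.getLast?_isSome.mpr hkne)
  have hyy := hW.2.2 k hik y hy
  have hyr : y + 1 ≤ (α k).length := by omega
  have hWk := nextwit hs hW hik hy hyr
  exact absurd (le_istar hWk) (not_le.mpr hik)

/-- no full or near-bounded slot at or beyond the max witness: strict bound -/
lemma lt_S_of_ge_istar {d : ℕ} {b : Cfg N} (hb : b ∈ P N d) (hd : 2 ≤ d)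
    {j : Fin (N+1)} (hj : istar b ≤ j) {y : ℕ} (hy : (b j).getLast? = some y) :
    y + 1 < S b j := by
  obtain ⟨hs, hC2, hC3, hex⟩ := hb
  have hW := W_istar hex
  rcases lt_or_eq_of_le hj with hlt | heq
  · exact hW.2.2 j hlt y hy
  · subst heq
    rcases Nat.lt_or_ge 1 ((b (istar b)).length) with h1 | h1
    · exact hW.2.1 h1 y hy
    · have hne := hW.ne_nil
      have hlen : (b (istar b)).length = 1 := by
        have := List.length_pos_iff.mpr hne; omega
      have hb0 : b (istar b) = [0] := singleton_of hlen hW.1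
      have hy0 : y = 0 := by rw [hb0] at hy; simpa using hy.symm
      have := S_istar_ge2 ⟨hs, hC2, hC3, hex⟩ hd
      omega

lemma ins_mem {d : ℕ} {α : Cfg N} (hα : α ∈ P N d) (hd : 2 ≤ d) (c : Fin (N+1)) :
    ins α c ∈ P N (d+1) ∧ W (ins α c) (istar α) := by
  obtain ⟨hs, hC2, hC3, hex⟩ := hα
  have hW := W_istar hex
  set m := istar α with hm
  set v : ℕ := if c < m then S α c else S α c - 1 with hv
  have hins : ins α c = Function.update α c (α c ++ [v]) := rfl
  have hSm2 : 2 ≤ S α m := S_istar_ge2 ⟨hs, hC2, hC3, hex⟩ hd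
  have hSc2 : m ≤ c → 2 ≤ S α c := fun h => le_trans hSm2 (S_mono α h)
  have hltv : ∀ x ∈ α c, x < v := by
    intro x hx
    by_cases hc : c < m
    · rw [hv, if_pos hc]; exact hC2 c x hx
    · push_neg at hc
      have hnil : α c ≠ [] := by intro h; rw [h] at hx; simp at hx
      obtain ⟨y, hy⟩ : ∃ y, (α c).getLast? = some y :=
        Option.isSome_iff_exists.mp (List.getLast?_isSome.mpr hnil)
      have h1 := lt_S_of_ge_istar ⟨hs, hC2, hC3, hex⟩ hd hc hy
      have h2 := mem_le_getLast (hs c) hx hy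
      rw [hv, if_neg (not_lt.mpr hc)]
      omega
  have hvle : v ≤ S α c := by rw [hv]; split <;> omega
  have hS' : ∀ j, S (ins α c) j = S α j + if c ≤ j then 1 else 0 := by
    intro j; rw [hins, S_append]; simp
  have hupd : ∀ {j : Fin (N+1)}, j ≠ c → (ins α c) j = α j := by
    intro j h; rw [hins, Function.update_of_ne h]
  have hatc : (ins α c) c = α c ++ [v] := by rw [hins, Function.update_self]
  have hlast : ((ins α c) c).getLast? = some v := by
    rw [hatc]; exact List.getLast?_concat
  have hsort : ∀ i, ((ins α c) i).Pairwise (· < ·) := by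
    intro i
    by_cases h : i = c
    · rw [h, hatc]
      refine List.pairwise_append.mpr ⟨hs c, by simp, ?_⟩
      intro a ha b hb
      simp only [List.mem_singleton] at hb
      subst hb
      exact hltv a ha
    · rw [hupd h]; exact hs i
  have hC2' : ∀ i, ∀ x ∈ (ins α c) i, x < S (ins α c) i := by
    intro i x hx
    by_cases h : i = c
    · rw [h] at hx ⊢
      rw [hatc, List.mem_append] at hx
      rw [hS']
      rcases hx with hx | hx
      · have := hC2 c x hx
        rw [if_pos le_rfl]
        omega
      · simp only [List.mem_singleton] at hx
        subst hx
        rw [if_pos le_rfl]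
        omega
    · have hxi : x ∈ α i := by rw [hupd h] at hx; exact hx
      have := hC2 i x hxi
      rw [hS' i]
      split <;> omega
  have hC3' : ∑ i, ((ins α c) i).length = d + 1 := by
    rw [hins, total_append]
    simp [hC3]
  have hWm : W (ins α c) m := by
    refine ⟨?_, ?_, ?_⟩
    · by_cases h : m = c
      · rw [h, hatc, List.head?_append_of_ne_nil (α c) (by rw [← h]; exact hW.ne_nil), ← h]
        exact hW.1
      · rw [hupd h]; exact hW.1
    · intro hlen x hx
      by_cases h : m = c
      · rw [h] at hx
        have hxv : x = v := by rw [hlast] at hx; exact (Option.some.inj hx).symm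
        have hcm : ¬ (c < m) := by rw [h]; exact lt_irrefl c
        have hv' : v = S α c - 1 := by rw [hv, if_neg hcm]
        have h2 : 2 ≤ S α c := hSc2 (le_of_eq h)
        rw [hS', h, if_pos le_rfl]
        omega
      · have hx' : (α m).getLast? = some x := by rw [hupd h] at hx; exact hx
        have hlen' : 1 < (α m).length := by rw [hupd h] at hlen; exact hlen
        have := hW.2.1 hlen' x hx'
        rw [hS']
        split <;> omega
    · intro j hj x hx
      by_cases h : j = c
      · rw [h] at hx hj
        have hxv : x = v := by rw [hlast] at hx; exact (Option.some.inj hx).symm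
        have hmc : m ≤ c := hj.le
        have hv' : v = S α c - 1 := by rw [hv, if_neg (not_lt.mpr hmc)]
        have h2 := hSc2 hmc
        rw [hS', h, if_pos le_rfl]
        omega
      · have hx' : (α j).getLast? = some x := by rw [hupd h] at hx; exact hx
        have := hW.2.2 j hj x hx'
        rw [hS']
        split <;> omega
  exact ⟨⟨hsort, hC2', hC3', ⟨m, hWm⟩⟩, hWm⟩

lemma istar_ins {d : ℕ} {α : Cfg N} (hα : α ∈ P N d) (hd : 2 ≤ d) (c : Fin (N+1)) :
    istar (ins α c) = istar α := by
  obtain ⟨hs, hC2, hC3, hex⟩ := hα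
  have hW := W_istar hex
  obtain ⟨hmem', hWm⟩ := ins_mem ⟨hs, hC2, hC3, hex⟩ hd c
  set m := istar α with hm
  have h1 : m ≤ istar (ins α c) := le_istar hWm
  refine le_antisymm ?_ h1
  set m' := istar (ins α c) with hm'
  have hWm' : W (ins α c) m' := W_istar ⟨m, hWm⟩
  by_contra hgt
  push_neg at hgt
  have hins : ins α c = Function.update α c (α c ++ [if c < m then S α c else S α c - 1]) := rfl
  have hupd : ∀ {j : Fin (N+1)}, j ≠ c → (ins α c) j = α j := by
    intro j h; rw [hins, Function.update_of_ne h]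
  have hhead : (α m').head? = some 0 := by
    by_cases h : m' = c
    · have hne : α c ≠ [] := by
        intro hnil
        have hcm : ¬ (c < m) := by rw [← h]; exact not_lt.mpr hgt.le
        have h2 : (ins α c) c = [S α c - 1] := by
          rw [hins, Function.update_self, hnil, if_neg hcm]
          rfl
        have h3 := hWm'.1
        rw [h, h2] at h3
        have h4 : S α c - 1 = 0 := by simpa using h3
        have h5 : 2 ≤ S α c := by
          refine le_trans (S_istar_ge2 ⟨hs, hC2, hC3, hex⟩ hd) (S_mono α ?_)
          rw [← h]; exact hgt.le
        omega
      have h3 := hWm'.1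
      rw [h, hins, Function.update_self, List.head?_append_of_ne_nil (α c) hne] at h3
      rw [h]
      exact h3
    · have h3 := hWm'.1
      rw [hupd h] at h3
      exact h3
  have hWα : W α m' :=
    ⟨hhead, fun _ x hx => hW.2.2 m' hgt x hx, fun j hj x hx => hW.2.2 j (hgt.trans hj) x hx⟩
  exact absurd (le_istar hWα) (not_le.mpr hgt)

lemma sel_ins {d : ℕ} {α : Cfg N} (hα : α ∈ P N d) (hd : 2 ≤ d) (c : Fin (N+1)) :
    sel (ins α c) = c := by
  obtain ⟨hs, hC2, hC3, hex⟩ := hα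
  have hW := W_istar hex
  have hii := istar_ins ⟨hs, hC2, hC3, hex⟩ hd c
  obtain ⟨hmem', hWm⟩ := ins_mem ⟨hs, hC2, hC3, hex⟩ hd c
  set m := istar α with hm
  set v : ℕ := if c < m then S α c else S α c - 1 with hv
  have hins : ins α c = Function.update α c (α c ++ [v]) := rfl
  have hupd : ∀ {j : Fin (N+1)}, j ≠ c → (ins α c) j = α j := by
    intro j h; rw [hins, Function.update_of_ne h]
  have hatc : (ins α c) c = α c ++ [v] := by rw [hins, Function.update_self]
  have hlast : ((ins α c) c).getLast? = some v := by rw [hatc]; exact List.getLast?_concat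
  have hS' : ∀ j, S (ins α c) j = S α j + if c ≤ j then 1 else 0 := by
    intro j; rw [hins, S_append]; simp
  have hSm2 : 2 ≤ S α m := S_istar_ge2 ⟨hs, hC2, hC3, hex⟩ hd
  by_cases hc : c < m
  · have hnear : nearF (ins α c) = ∅ := by
      rw [Finset.eq_empty_iff_forall_notMem]
      intro j hj
      rw [mem_nearF, hii] at hj
      obtain ⟨hmj, y, hy, hyS⟩ := hj
      have hjc : j ≠ c := by intro h; rw [h] at hmj; exact absurd hc (not_lt.mpr hmj)
      have hy' : (α j).getLast? = some y := by rw [hupd hjc] at hy; exact hy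
      have hSj : S (ins α c) j = S α j + 1 := by
        rw [hS', if_pos (le_of_lt (lt_of_lt_of_le hc hmj))]
      have h1 := lt_S_of_ge_istar ⟨hs, hC2, hC3, hex⟩ hd hmj hy'
      omega
    have hfull_c : c ∈ fullF (ins α c) := by
      rw [mem_fullF]
      exact ⟨v, hlast, by rw [hS', if_pos le_rfl, hv, if_pos hc]⟩
    have hmax : ∀ j ∈ fullF (ins α c), j ≤ c := by
      intro j hj
      by_contra hgt
      push_neg at hgt
      obtain ⟨y, hy, hyS⟩ := mem_fullF.mp hj
      have hjc : j ≠ c := (ne_of_gt hgt)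
      have hy' : (α j).getLast? = some y := by rw [hupd hjc] at hy; exact hy
      have hymem := List.mem_of_getLast? hy'
      have := hC2 j y hymem
      have hSj : S (ins α c) j = S α j + 1 := by rw [hS', if_pos hgt.le]
      omega
    rw [sel, dif_neg (by rw [hnear]; exact Finset.not_nonempty_empty),
      dif_pos ⟨c, hfull_c⟩]
    exact le_antisymm (Finset.max'_le _ _ _ hmax) (Finset.le_max' _ _ hfull_c)
  · push_neg at hc
    have hSc2 : 2 ≤ S α c := le_trans hSm2 (S_mono α hc)
    have hnear_c : c ∈ nearF (ins α c) := by
      rw [mem_nearF, hii]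
      refine ⟨hc, v, hlast, ?_⟩
      rw [hS', if_pos le_rfl, hv, if_neg (not_lt.mpr hc)]
      omega
    have hne : (nearF (ins α c)).Nonempty := ⟨c, hnear_c⟩
    have hmax : ∀ j ∈ nearF (ins α c), j ≤ c := by
      intro j hj
      by_contra hgt
      push_neg at hgt
      obtain ⟨hmj, y, hy, hyS⟩ := mem_nearF.mp hj
      have hjc : j ≠ c := (ne_of_gt hgt)
      have hy' : (α j).getLast? = some y := by rw [hupd hjc] at hy; exact hy
      have hSj : S (ins α c) j = S α j + 1 := by rw [hS', if_pos hgt.le]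
      have h1 := hW.2.2 j (lt_of_le_of_lt hc hgt) y hy'
      omega
    rw [sel, dif_pos hne]
    exact le_antisymm (Finset.max'_le _ _ _ hmax) (Finset.le_max' _ _ hnear_c)

lemma del_ins {d : ℕ} {α : Cfg N} (hα : α ∈ P N d) (hd : 2 ≤ d) (c : Fin (N+1)) :
    del (ins α c) = α := by
  have hsel := sel_ins hα hd c
  rw [del, hsel]
  have hatc : (ins α c) c = α c ++ [if c < istar α then S α c else S α c - 1] :=
    Function.update_self _ _ _
  rw [hatc, List.dropLast_concat, ins, Function.update_idem, Function.update_eq_self]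

lemma exists_gt_of_S_lt {α : Cfg N} {i : Fin (N+1)} (h : S α i < ∑ t, (α t).length) :
    ∃ k, i < k ∧ α k ≠ [] := by
  by_contra hno
  push_neg at hno
  have htot : ∑ t, (α t).length = S α i := by
    rw [S]
    symm
    apply Finset.sum_subset (Finset.subset_univ _)
    intro t _ ht
    have hit : i < t := by
      rcases lt_or_ge i t with h' | h'
      · exact h'
      · exact absurd (Finset.mem_Iic.mpr h') ht
    rw [hno t hit]
    rfl
  omega

lemma min_slot_gt {α : Cfg N} {i : Fin (N+1)} (hex2 : ∃ k, i < k ∧ α k ≠ []) :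
    ∃ k, i < k ∧ α k ≠ [] ∧ S α k = S α i + (α k).length := by
  classical
  obtain ⟨k0, hk0⟩ := hex2
  set F := Finset.univ.filter (fun k => i < k ∧ α k ≠ []) with hF
  have hFne : F.Nonempty := ⟨k0, by simp [hF, hk0.1, hk0.2]⟩
  set k := F.min' hFne with hk
  obtain ⟨-, hik, hkne⟩ := Finset.mem_filter.mp (F.min'_mem hFne)
  refine ⟨k, hik, hkne, S_of_min_gt hik ?_⟩
  intro t h1 h2
  by_contra hne2
  have : t ∈ F := by simp [hF, h1, hne2]
  exact absurd (F.min'_le t this) (not_le.mpr h2)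

lemma exists_full {e : ℕ} {b : Cfg N} (hs : ∀ i, (b i).Pairwise (· < ·))
    (hC2 : ∀ i, ∀ x ∈ b i, x < S b i) (hC3 : ∑ i, (b i).length = e) (he : 1 ≤ e) :
    (fullF b).Nonempty := by
  classical
  have hex0 : ∃ k, b k ≠ [] := by
    by_contra hno
    push_neg at hno
    have : ∑ i, (b i).length = 0 := by
      apply Finset.sum_eq_zero
      intro t _
      rw [hno t]
      rfl
    omega
  obtain ⟨k0, hk0⟩ := hex0
  set F := Finset.univ.filter (fun k => b k ≠ []) with hF
  have hFne : F.Nonempty := ⟨k0, by simp [hF, hk0]⟩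
  set k := F.min' hFne with hk
  obtain ⟨-, hkne⟩ := Finset.mem_filter.mp (F.min'_mem hFne)
  have hmid : ∀ t, t < k → b t = [] := by
    intro t h2
    by_contra hne2
    have : t ∈ F := by simp [hF, hne2]
    exact absurd (F.min'_le t this) (not_le.mpr h2)
  have hSk : S b k = (b k).length := by
    rw [S, Finset.sum_eq_single_of_mem k (Finset.mem_Iic.mpr le_rfl)]
    intro t ht htk
    rw [hmid t (lt_of_le_of_ne (Finset.mem_Iic.mp ht) htk)]
    rfl
  obtain ⟨y, hy⟩ : ∃ y, (b k).getLast? = some y :=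
    Option.isSome_iff_exists.mp (List.getLast?_isSome.mpr hkne)
  have hylt := hC2 k y (List.mem_of_getLast? hy)
  have hh : (b k).head? = some ((b k).head hkne) := List.head?_eq_head hkne
  have hhl := head_add_length (hs k) hh hy
  refine ⟨k, mem_fullF.mpr ⟨y, hy, ?_⟩⟩
  omega

lemma ins_del {d : ℕ} {b : Cfg N} (hb : b ∈ P N (d+1)) (hd : 2 ≤ d) :
    del b ∈ P N d ∧ ins (del b) (sel b) = b := by
  classical
  obtain ⟨hs, hC2, hC3, hex⟩ := hb
  have hb' : b ∈ P N (d+1) := ⟨hs, hC2, hC3, hex⟩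
  have hd1 : 2 ≤ d + 1 := by omega
  have hW := W_istar hex
  set m := istar b with hm
  have hSm2 : 2 ≤ S b m := S_istar_ge2 hb' hd1
  by_cases hne : (nearF b).Nonempty
  · -- Case B : delete from the maximal near slot (≥ m)
    have hcsel : sel b = (nearF b).max' hne := by rw [sel, dif_pos hne]
    set c := (nearF b).max' hne with hc
    obtain ⟨hmc, y, hy, hyS⟩ := mem_nearF.mp ((nearF b).max'_mem hne)
    rw [← hc] at hmc hy hyS
    have hmaxn : ∀ j ∈ nearF b, j ≤ c := fun j hj => Finset.le_max' _ _ hj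
    have hbcne : b c ≠ [] := by intro h; rw [h] at hy; simp at hy
    have hdecomp : (b c).dropLast ++ [y] = b c := decomp hy
    have hdel : del b = Function.update b c ((b c).dropLast) := by rw [del, hcsel]
    set a := Function.update b c ((b c).dropLast) with ha
    have hac : a c = (b c).dropLast := Function.update_self _ _ _
    have haj : ∀ {j : Fin (N+1)}, j ≠ c → a j = b j := by
      intro j h; rw [ha, Function.update_of_ne h]
    have happ : Function.update a c (a c ++ [y]) = b := by
      rw [hac, ha, Function.update_idem, hdecomp, Function.update_eq_self]
    have hS_rel : ∀ j, S b j = S a j + if c ≤ j then 1 else 0 := by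
      intro j
      have h1 := S_append a c [y] j
      rw [happ] at h1
      simpa using h1
    have hafter : ∀ j, c < j → ∀ z, (b j).getLast? = some z → z + 1 < S b j := by
      intro j hj z hz
      exact lt_S_of_ge_istar hb' hd1 (le_of_lt (lt_of_le_of_lt hmc hj)) hz
    have hnotnear_gt : ∀ j, c < j → ∀ z, (b j).getLast? = some z → z + 2 ≠ S b j := by
      intro j hj z hz heq
      have : j ∈ nearF b := mem_nearF.mpr ⟨le_of_lt (lt_of_le_of_lt hmc hj), z, hz, heq⟩
      exact absurd (hmaxn j this) (not_le.mpr hj)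
    have hlen2 : c = m → 2 ≤ (b m).length := by
      intro hcm
      by_contra hl
      push_neg at hl
      have h1 : (b m).length = 1 := by
        have := List.length_pos_iff.mpr hW.ne_nil
        omega
      have hb0 : b m = [0] := singleton_of h1 hW.1
      have hy0 : y = 0 := by
        rw [hcm, hb0] at hy
        simpa using hy.symm
      have hS2 : S b m = 2 := by rw [← hcm]; omega
      have hex2 : ∃ k, m < k ∧ b k ≠ [] := by
        apply exists_gt_of_S_lt
        rw [hC3]
        omega
      obtain ⟨k, hmk, hkne, hSk⟩ := min_slot_gt hex2
      obtain ⟨z, hz⟩ : ∃ z, (b k).getLast? = some z :=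
        Option.isSome_iff_exists.mp (List.getLast?_isSome.mpr hkne)
      have h2 := hW.2.2 k hmk z hz
      have h3 := hnotnear_gt k (by rw [hcm]; exact hmk) z hz
      have hz1 : z + 1 ≤ (b k).length := by omega
      have hWk := nextwit hs hW hmk hz hz1
      exact absurd (le_istar hWk) (not_le.mpr hmk)
    have hsorta : ∀ i, (a i).Pairwise (· < ·) := by
      intro i
      by_cases h : i = c
      · rw [h, hac]
        exact List.Pairwise.sublist (List.dropLast_sublist _) (hs c)
      · rw [haj h]; exact hs i
    have hdll : ∀ z, (a c).getLast? = some z → z < y := by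
      intro z hz
      rw [hac] at hz
      exact mem_dropLast_lt (hs c) (List.mem_of_getLast? hz) hy
    have hSac : S a c = y + 1 := by
      have h1 := hS_rel c
      rw [if_pos le_rfl] at h1
      omega
    have hC2a : ∀ i, ∀ x ∈ a i, x < S a i := by
      intro i x hx
      rcases lt_trichotomy i c with hlt | heq | hgt
      · have h1 := hS_rel i
        rw [if_neg (not_le.mpr hlt)] at h1
        have hx' : x ∈ b i := by rw [haj (ne_of_lt hlt)] at hx; exact hx
        have := hC2 i x hx'
        omega
      · rw [heq] at hx ⊢
        rw [hac] at hx
        have := mem_dropLast_lt (hs c) hx hy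
        omega
      · have hx' : x ∈ b i := by rw [haj (ne_of_gt hgt)] at hx; exact hx
        have hbine : b i ≠ [] := by intro hh; rw [hh] at hx'; simp at hx'
        obtain ⟨z, hz⟩ : ∃ z, (b i).getLast? = some z :=
          Option.isSome_iff_exists.mp (List.getLast?_isSome.mpr hbine)
        have h1 := hafter i hgt z hz
        have h2 := mem_le_getLast (hs i) hx' hz
        have h3 := hS_rel i
        rw [if_pos hgt.le] at h3
        omega
    have hC3a : ∑ i, (a i).length = d := by
      have h1 := total_append a c [y]
      rw [happ] at h1
      simp only [List.length_singleton] at h1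
      omega
    have hWam : W a m := by
      refine ⟨?_, ?_, ?_⟩
      · by_cases h : c = m
        · rw [← h, hac, head?_dropLast (by rw [h]; exact hlen2 h), h]
          exact hW.1
        · rw [haj (fun he => h he.symm)]
          exact hW.1
      · intro hlen z hz
        by_cases h : c = m
        · have hz' : z < y := hdll z (by rw [← h] at hz; exact hz)
          rw [← h]
          omega
        · have hmltc : m < c := lt_of_le_of_ne hmc (fun he => h he.symm)
          have hz' : (b m).getLast? = some z := by
            rw [haj (ne_of_lt hmltc)] at hz; exact hz
          have hlen' : 1 < (b m).length := by rw [haj (ne_of_lt hmltc)] at hlen; exact hlen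
          have h2 := hW.2.1 hlen' z hz'
          have h3 := hS_rel m
          rw [if_neg (not_le.mpr hmltc)] at h3
          omega
      · intro j hj z hz
        rcases lt_trichotomy j c with hlt | heq | hgt
        · have hz' : (b j).getLast? = some z := by rw [haj (ne_of_lt hlt)] at hz; exact hz
          have h2 := hW.2.2 j hj z hz'
          have h3 := hS_rel j
          rw [if_neg (not_le.mpr hlt)] at h3
          omega
        · rw [heq] at hz ⊢
          have hz'' := hdll z hz
          omega
        · have hz' : (b j).getLast? = some z := by rw [haj (ne_of_gt hgt)] at hz; exact hz
          have h2 := hafter j hgt z hz'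
          have h4 := hnotnear_gt j hgt z hz'
          have h3 := hS_rel j
          rw [if_pos hgt.le] at h3
          omega
    have histara : istar a = m := by
      refine le_antisymm ?_ (le_istar hWam)
      by_contra hgt
      push_neg at hgt
      set m' := istar a with hm'
      have hWa' : W a m' := W_istar ⟨m, hWam⟩
      have hWbm' : W b m' := by
        refine ⟨?_, ?_, ?_⟩
        · by_cases h : m' = c
          · have hane : a c ≠ [] := by
              intro h0
              have h5 := hWa'.1
              rw [h, h0] at h5
              simp at h5
            have h6 : (b c).dropLast ≠ [] := by rw [← hac]; exact hane
            rw [h, ← hdecomp, List.head?_append_of_ne_nil _ h6, ← hac, ← h]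
            exact hWa'.1
          · have h5 := hWa'.1
            rw [haj h] at h5
            exact h5
        · intro hlen z hz
          by_cases h : m' = c
          · have hzy : z = y := by rw [h, hy] at hz; exact (Option.some.inj hz).symm
            rw [h]
            omega
          · have hz' : (a m').getLast? = some z := by rw [haj h]; exact hz
            have hlen' : 1 < (a m').length := by rw [haj h]; exact hlen
            have h2 := hWa'.2.1 hlen' z hz'
            have h3 := hS_rel m'
            split at h3 <;> omega
        · intro j hj z hz
          by_cases h : j = c
          · have hzy : z = y := by rw [h, hy] at hz; exact (Option.some.inj hz).symm
            rw [h]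
            omega
          · have hz' : (a j).getLast? = some z := by rw [haj h]; exact hz
            have h2 := hWa'.2.2 j hj z hz'
            have h3 := hS_rel j
            split at h3 <;> omega
      exact absurd (le_istar hWbm') (not_le.mpr hgt)
    have hmema : a ∈ P N d := ⟨hsorta, hC2a, hC3a, ⟨m, hWam⟩⟩
    have hvy : (if c < istar a then S a c else S a c - 1) = y := by
      rw [histara, if_neg (not_lt.mpr hmc)]
      omega
    constructor
    · rw [hdel]; exact hmema
    · rw [ins, hdel, hcsel, hvy]
      exact happ
  · -- Case A : delete from the maximal full slot (< m)
    have hfne : (fullF b).Nonempty := exists_full hs hC2 hC3 (by omega)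
    have hcsel : sel b = (fullF b).max' hfne := by rw [sel, dif_neg hne, dif_pos hfne]
    set c := (fullF b).max' hfne with hc
    obtain ⟨y, hy, hyS⟩ := mem_fullF.mp ((fullF b).max'_mem hfne)
    rw [← hc] at hy hyS
    have hmaxf : ∀ j ∈ fullF b, j ≤ c := fun j hj => Finset.le_max' _ _ hj
    have hcm : c < m := by
      by_contra h
      push_neg at h
      have := lt_S_of_ge_istar hb' hd1 h hy
      omega
    have hnotnear : ∀ j, m ≤ j → ∀ z, (b j).getLast? = some z → z + 2 ≠ S b j := by
      intro j hj z hz heq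
      exact hne ⟨j, mem_nearF.mpr ⟨hj, z, hz, heq⟩⟩
    have hafter : ∀ j, c < j → ∀ z, (b j).getLast? = some z → z + 1 < S b j := by
      intro j hj z hz
      have h1 := hC2 j z (List.mem_of_getLast? hz)
      have h2 : z + 1 ≠ S b j := by
        intro heq
        exact absurd (hmaxf j (mem_fullF.mpr ⟨z, hz, heq⟩)) (not_le.mpr hj)
      omega
    have hbcne : b c ≠ [] := by intro h; rw [h] at hy; simp at hy
    have hdecomp : (b c).dropLast ++ [y] = b c := decomp hy
    have hdel : del b = Function.update b c ((b c).dropLast) := by rw [del, hcsel]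
    set a := Function.update b c ((b c).dropLast) with ha
    have hac : a c = (b c).dropLast := Function.update_self _ _ _
    have haj : ∀ {j : Fin (N+1)}, j ≠ c → a j = b j := by
      intro j h; rw [ha, Function.update_of_ne h]
    have happ : Function.update a c (a c ++ [y]) = b := by
      rw [hac, ha, Function.update_idem, hdecomp, Function.update_eq_self]
    have hS_rel : ∀ j, S b j = S a j + if c ≤ j then 1 else 0 := by
      intro j
      have h1 := S_append a c [y] j
      rw [happ] at h1
      simpa using h1
    have hsorta : ∀ i, (a i).Pairwise (· < ·) := by
      intro i
      by_cases h : i = c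
      · rw [h, hac]
        exact List.Pairwise.sublist (List.dropLast_sublist _) (hs c)
      · rw [haj h]; exact hs i
    have hdll : ∀ z, (a c).getLast? = some z → z < y := by
      intro z hz
      rw [hac] at hz
      exact mem_dropLast_lt (hs c) (List.mem_of_getLast? hz) hy
    have hSac : S a c = y := by
      have h1 := hS_rel c
      rw [if_pos le_rfl] at h1
      omega
    have hC2a : ∀ i, ∀ x ∈ a i, x < S a i := by
      intro i x hx
      rcases lt_trichotomy i c with hlt | heq | hgt
      · have h1 := hS_rel i
        rw [if_neg (not_le.mpr hlt)] at h1
        have hx' : x ∈ b i := by rw [haj (ne_of_lt hlt)] at hx; exact hx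
        have := hC2 i x hx'
        omega
      · rw [heq] at hx ⊢
        rw [hac] at hx
        have := mem_dropLast_lt (hs c) hx hy
        omega
      · have hx' : x ∈ b i := by rw [haj (ne_of_gt hgt)] at hx; exact hx
        have hbine : b i ≠ [] := by intro hh; rw [hh] at hx'; simp at hx'
        obtain ⟨z, hz⟩ : ∃ z, (b i).getLast? = some z :=
          Option.isSome_iff_exists.mp (List.getLast?_isSome.mpr hbine)
        have h1 := hafter i hgt z hz
        have h2 := mem_le_getLast (hs i) hx' hz
        have h3 := hS_rel i
        rw [if_pos hgt.le] at h3
        omega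
    have hC3a : ∑ i, (a i).length = d := by
      have h1 := total_append a c [y]
      rw [happ] at h1
      simp only [List.length_singleton] at h1
      omega
    have hWam : W a m := by
      refine ⟨?_, ?_, ?_⟩
      · rw [haj (ne_of_gt hcm)]
        exact hW.1
      · intro hlen z hz
        have hz' : (b m).getLast? = some z := by rw [haj (ne_of_gt hcm)] at hz; exact hz
        have hlen' : 1 < (b m).length := by rw [haj (ne_of_gt hcm)] at hlen; exact hlen
        have h2 := hW.2.1 hlen' z hz'
        have h4 := hnotnear m le_rfl z hz'
        have h3 := hS_rel m
        rw [if_pos hcm.le] at h3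
        omega
      · intro j hj z hz
        have hcj : c < j := hcm.trans hj
        have hz' : (b j).getLast? = some z := by rw [haj (ne_of_gt hcj)] at hz; exact hz
        have h2 := hW.2.2 j hj z hz'
        have h4 := hnotnear j hj.le z hz'
        have h3 := hS_rel j
        rw [if_pos hcj.le] at h3
        omega
    have histara : istar a = m := by
      refine le_antisymm ?_ (le_istar hWam)
      by_contra hgt
      push_neg at hgt
      set m' := istar a with hm'
      have hWa' : W a m' := W_istar ⟨m, hWam⟩
      have hcm' : c < m' := hcm.trans hgt
      have hWbm' : W b m' := by
        refine ⟨?_, ?_, ?_⟩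
        · have h5 := hWa'.1
          rw [haj (ne_of_gt hcm')] at h5
          exact h5
        · intro hlen z hz
          have hz' : (a m').getLast? = some z := by rw [haj (ne_of_gt hcm')]; exact hz
          have hlen' : 1 < (a m').length := by rw [haj (ne_of_gt hcm')]; exact hlen
          have h2 := hWa'.2.1 hlen' z hz'
          have h3 := hS_rel m'
          split at h3 <;> omega
        · intro j hj z hz
          have hcj : c < j := hcm'.trans hj
          have hz' : (a j).getLast? = some z := by rw [haj (ne_of_gt hcj)]; exact hz
          have h2 := hWa'.2.2 j hj z hz'
          have h3 := hS_rel j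
          split at h3 <;> omega
      exact absurd (le_istar hWbm') (not_le.mpr hgt)
    have hmema : a ∈ P N d := ⟨hsorta, hC2a, hC3a, ⟨m, hWam⟩⟩
    have hvy : (if c < istar a then S a c else S a c - 1) = y := by
      rw [histara, if_pos hcm]
      exact hSac
    constructor
    · rw [hdel]; exact hmema
    · rw [ins, hdel, hcsel, hvy]
      exact happ

/-! ### counting -/

lemma step {d : ℕ} (hd : 2 ≤ d) : (P N (d+1)).ncard = (N+1) * (P N d).ncard := by
  classical
  have himg : (fun p : Cfg N × Fin (N+1) => ins p.1 p.2) ''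
      ((P N d) ×ˢ (Set.univ : Set (Fin (N+1)))) = P N (d+1) := by
    ext b
    constructor
    · rintro ⟨⟨α, c⟩, ⟨hα, -⟩, rfl⟩
      exact (ins_mem hα hd c).1
    · intro hb
      obtain ⟨hmem, heq⟩ := ins_del hb hd
      exact ⟨(del b, sel b), ⟨hmem, trivial⟩, heq⟩
  have hinj : Set.InjOn (fun p : Cfg N × Fin (N+1) => ins p.1 p.2)
      ((P N d) ×ˢ (Set.univ : Set (Fin (N+1)))) := by
    rintro ⟨α, c⟩ ⟨hα, -⟩ ⟨β, e⟩ ⟨hβ, -⟩ h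
    simp only at h
    have h1 : sel (ins α c) = sel (ins β e) := by rw [h]
    rw [sel_ins hα hd c, sel_ins hβ hd e] at h1
    subst h1
    have h2 : del (ins α c) = del (ins β c) := by rw [h]
    rw [del_ins hα hd c, del_ins hβ hd c] at h2
    simp only at h2
    rw [Prod.ext_iff]
    exact ⟨h2, rfl⟩
  rw [← himg, Set.ncard_image_of_injOn hinj, ← Nat.card_coe_set_eq,
    Nat.card_congr (Equiv.Set.prod _ _), Nat.card_prod, Nat.card_coe_set_eq,
    Nat.card_congr (Equiv.Set.univ _), Nat.card_eq_fintype_card, Fintype.card_fin, mul_comm]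

def Gp (N : ℕ) (p : Fin (N+1) × Fin (N+1)) : Cfg N :=
  fun t => if t = p.1 ∨ t = p.2 then [0] else []

lemma S_two {α : Cfg N} {i j : Fin (N+1)} (hij : i ≠ j)
    (hzero : ∀ t, t ≠ i → t ≠ j → (α t).length = 0) (t : Fin (N+1)) :
    S α t = (if i ≤ t then (α i).length else 0) + (if j ≤ t then (α j).length else 0) := by
  classical
  rw [S]
  have hcong : ∀ u ∈ Finset.Iic t, (α u).length
      = (if u = i then (α i).length else 0) + (if u = j then (α j).length else 0) := by
    intro u _
    by_cases h1 : u = i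
    · subst h1
      rw [if_pos rfl, if_neg hij]
      omega
    · by_cases h2 : u = j
      · subst h2
        rw [if_neg h1, if_pos rfl]
        omega
      · rw [if_neg h1, if_neg h2, hzero u h1 h2]
  rw [Finset.sum_congr rfl hcong, Finset.sum_add_distrib,
    Finset.sum_ite_eq' (Finset.Iic t) i (fun _ => (α i).length),
    Finset.sum_ite_eq' (Finset.Iic t) j (fun _ => (α j).length)]
  simp [Finset.mem_Iic]

lemma total_two {α : Cfg N} {i j : Fin (N+1)} (hij : i ≠ j)
    (hzero : ∀ t, t ≠ i → t ≠ j → (α t).length = 0) :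
    ∑ t, (α t).length = (α i).length + (α j).length := by
  classical
  have hcong : ∀ u ∈ (Finset.univ : Finset (Fin (N+1))), (α u).length
      = (if u = i then (α i).length else 0) + (if u = j then (α j).length else 0) := by
    intro u _
    by_cases h1 : u = i
    · subst h1
      rw [if_pos rfl, if_neg hij]
      omega
    · by_cases h2 : u = j
      · subst h2
        rw [if_neg h1, if_pos rfl]
        omega
      · rw [if_neg h1, if_neg h2, hzero u h1 h2]
  rw [Finset.sum_congr rfl hcong, Finset.sum_add_distrib,
    Finset.sum_ite_eq' Finset.univ i (fun _ => (α i).length),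
    Finset.sum_ite_eq' Finset.univ j (fun _ => (α j).length)]
  simp

lemma Gp_zero {i j t : Fin (N+1)} (h1 : t ≠ i) (h2 : t ≠ j) :
    (Gp N (i, j) t).length = 0 := by
  unfold Gp
  rw [if_neg (by simp only; tauto)]
  rfl

lemma Gp_mem {i j : Fin (N+1)} (hij : i < j) : Gp N (i, j) ∈ P N 2 := by
  have hne : i ≠ j := ne_of_lt hij
  have hzero : ∀ t, t ≠ i → t ≠ j → (Gp N (i,j) t).length = 0 := fun t h1 h2 => Gp_zero h1 h2
  have hgi : Gp N (i,j) i = [0] := by unfold Gp; rw [if_pos (Or.inl rfl)]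
  have hgj : Gp N (i,j) j = [0] := by unfold Gp; rw [if_pos (Or.inr rfl)]
  have hSt := S_two hne hzero
  rw [hgi, hgj] at hSt
  simp only [List.length_singleton] at hSt
  refine ⟨?_, ?_, ?_, ⟨i, ?_, ?_, ?_⟩⟩
  · intro t
    unfold Gp
    split
    · exact List.pairwise_singleton _ 0
    · exact List.Pairwise.nil
  · intro t x hx
    have htne : Gp N (i,j) t ≠ [] := by intro h; rw [h] at hx; simp at hx
    have ht : t = i ∨ t = j := by
      by_contra hq
      push_neg at hq
      have := Gp_zero (N := N) hq.1 hq.2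
      rw [List.length_eq_zero_iff] at this
      exact htne this
    have hx0 : x = 0 := by
      rcases ht with rfl | rfl
      · rw [hgi] at hx; simpa using hx
      · rw [hgj] at hx; simpa using hx
    subst hx0
    rw [hSt]
    rcases ht with rfl | rfl
    · rw [if_pos le_rfl]
      omega
    · rw [if_pos le_rfl, if_pos hij.le]
      omega
  · rw [total_two hne hzero, hgi, hgj]
    rfl
  · rw [hgi]
    rfl
  · intro hlen
    rw [hgi] at hlen
    simp at hlen
  · intro k hk x hx
    by_cases hkj : k = j
    · subst hkj
      rw [hgj] at hx
      have hx0 : x = 0 := by simpa using hx.symm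
      subst hx0
      rw [hSt k, if_pos hij.le, if_pos le_rfl]
      omega
    · have : Gp N (i,j) k = [] := by
        rw [← List.length_eq_zero_iff]
        exact Gp_zero (ne_of_gt hk) hkj
      rw [this] at hx
      simp at hx

lemma base : (P N 2).ncard = N * (N+1) / 2 := by
  classical
  have himg : Gp N '' {p : Fin (N+1) × Fin (N+1) | p.1 < p.2} = P N 2 := by
    ext α
    constructor
    · rintro ⟨⟨i, j⟩, hij, rfl⟩
      exact Gp_mem hij
    · rintro ⟨hs, hC2, hC3, i, hWi⟩
      have hine : α i ≠ [] := hWi.ne_nil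
      have h1 : 1 ≤ (α i).length := List.length_pos_iff.mpr hine
      have hle2 : (α i).length ≤ 2 := by
        have hss : (α i).length ≤ ∑ t, (α t).length :=
          Finset.single_le_sum (f := fun t => (α t).length)
            (fun _ _ => Nat.zero_le _) (Finset.mem_univ i)
        omega
      have herase : (α i).length + ∑ t ∈ Finset.univ.erase i, (α t).length = 2 := by
        rw [Finset.add_sum_erase Finset.univ (fun t => (α t).length) (Finset.mem_univ i)]
        exact hC3
      have hlen1 : (α i).length = 1 := by
        by_contra hl
        have h2 : (α i).length = 2 := by omega
        have hrest : ∀ t, t ≠ i → (α t).length = 0 := by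
          intro t ht
          have hz : ∑ t ∈ Finset.univ.erase i, (α t).length = 0 := by omega
          exact Finset.sum_eq_zero_iff.mp hz t (Finset.mem_erase.mpr ⟨ht, Finset.mem_univ t⟩)
        have hSi : S α i = 2 := by
          rw [S, Finset.sum_eq_single_of_mem i (Finset.mem_Iic.mpr le_rfl)]
          · exact h2
          · intro t _ ht
            exact hrest t ht
        obtain ⟨z, hz⟩ : ∃ z, (α i).getLast? = some z :=
          Option.isSome_iff_exists.mp (List.getLast?_isSome.mpr hine)
        have h3 := hWi.2.1 (by omega) z hz
        have h4 := head_add_length (hs i) hWi.1 hz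
        omega
      have hbi : α i = [0] := singleton_of hlen1 hWi.1
      obtain ⟨j, hjne, hjlen⟩ : ∃ j, j ≠ i ∧ (α j).length = 1 := by
        have hex1 : ∃ j ∈ Finset.univ.erase i, (α j).length ≠ 0 := by
          by_contra hno
          push_neg at hno
          have : ∑ t ∈ Finset.univ.erase i, (α t).length = 0 :=
            Finset.sum_eq_zero (fun t ht => hno t ht)
          omega
        obtain ⟨j, hjm, hj0⟩ := hex1
        refine ⟨j, (Finset.mem_erase.mp hjm).1, ?_⟩
        have hss : (α j).length ≤ ∑ t ∈ Finset.univ.erase i, (α t).length :=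
          Finset.single_le_sum (f := fun t => (α t).length)
            (fun _ _ => Nat.zero_le _) hjm
        omega
      have hij' : i ≠ j := fun h => hjne h.symm
      have hrest : ∀ t, t ≠ i → t ≠ j → (α t).length = 0 := by
        intro t hti htj
        have h5 : (α j).length + ∑ t ∈ (Finset.univ.erase i).erase j, (α t).length
            = ∑ t ∈ Finset.univ.erase i, (α t).length := by
          rw [Finset.add_sum_erase _ (fun t => (α t).length)
            (Finset.mem_erase.mpr ⟨hjne, Finset.mem_univ j⟩)]
        have hz : ∑ t ∈ (Finset.univ.erase i).erase j, (α t).length = 0 := by omega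
        exact Finset.sum_eq_zero_iff.mp hz t
          (Finset.mem_erase.mpr ⟨htj, Finset.mem_erase.mpr ⟨hti, Finset.mem_univ t⟩⟩)
      obtain ⟨z, hbj⟩ : ∃ z, α j = [z] := List.length_eq_one_iff.mp hjlen
      rcases lt_or_gt_of_ne hjne with hji | hilt
      · have hSj : S α j = 1 := by
          rw [S_two hij' hrest j, if_neg (not_le.mpr hji), if_pos le_rfl, hjlen]
        have hz0 : z = 0 := by
          have := hC2 j z (by rw [hbj]; simp)
          omega
        subst hz0
        refine ⟨(j, i), hji, ?_⟩
        funext t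
        by_cases h1 : t = j
        · subst h1; unfold Gp; rw [if_pos (Or.inl rfl)]; exact hbj.symm
        · by_cases h2 : t = i
          · subst h2; unfold Gp; rw [if_pos (Or.inr rfl)]; exact hbi.symm
          · have h3 := hrest t h2 h1
            rw [List.length_eq_zero_iff] at h3
            unfold Gp
            rw [if_neg (by simp only; tauto)]
            exact h3.symm
      · have hSj : S α j = 2 := by
          rw [S_two hij' hrest j, if_pos hilt.le, if_pos le_rfl, hlen1, hjlen]
        have h6 := hWi.2.2 j hilt z (by rw [hbj]; rfl)
        have hz0 : z = 0 := by omega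
        subst hz0
        refine ⟨(i, j), hilt, ?_⟩
        funext t
        by_cases h1 : t = i
        · subst h1; unfold Gp; rw [if_pos (Or.inl rfl)]; exact hbi.symm
        · by_cases h2 : t = j
          · subst h2; unfold Gp; rw [if_pos (Or.inr rfl)]; exact hbj.symm
          · have h3 := hrest t h1 h2
            rw [List.length_eq_zero_iff] at h3
            unfold Gp
            rw [if_neg (by simp only; tauto)]
            exact h3.symm
  have hinj : Set.InjOn (Gp N) {p : Fin (N+1) × Fin (N+1) | p.1 < p.2} := by
    rintro ⟨i, j⟩ hij ⟨i', j'⟩ hij' h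
    simp only [Set.mem_setOf_eq] at hij hij'
    have key : ∀ t : Fin (N+1), (t = i ∨ t = j) → (t = i' ∨ t = j') := by
      intro t ht
      by_contra hnot
      push_neg at hnot
      have h1 : Gp N (i, j) t = [0] := by unfold Gp; rw [if_pos ht]
      have h2 : Gp N (i', j') t = [] := by
        unfold Gp
        rw [if_neg (by simp only; tauto)]
      rw [h, h2] at h1
      simp at h1
    have key' : ∀ t : Fin (N+1), (t = i' ∨ t = j') → (t = i ∨ t = j) := by
      intro t ht
      by_contra hnot
      push_neg at hnot
      have h1 : Gp N (i', j') t = [0] := by unfold Gp; rw [if_pos ht]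
      have h2 : Gp N (i, j) t = [] := by
        unfold Gp
        rw [if_neg (by simp only; tauto)]
      rw [← h, h2] at h1
      simp at h1
    have tov : ∀ {u w : Fin (N+1)}, u = w → (u : ℕ) = (w : ℕ) := fun h => congrArg Fin.val h
    have E1 : (i : ℕ) = i' ∨ (i : ℕ) = j' := by
      rcases key i (Or.inl rfl) with h' | h'
      · exact Or.inl (tov h')
      · exact Or.inr (tov h')
    have E2 : (j : ℕ) = i' ∨ (j : ℕ) = j' := by
      rcases key j (Or.inr rfl) with h' | h'
      · exact Or.inl (tov h')
      · exact Or.inr (tov h')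
    have E3 : (i' : ℕ) = i ∨ (i' : ℕ) = j := by
      rcases key' i' (Or.inl rfl) with h' | h'
      · exact Or.inl (tov h')
      · exact Or.inr (tov h')
    have E4 : (j' : ℕ) = i ∨ (j' : ℕ) = j := by
      rcases key' j' (Or.inr rfl) with h' | h'
      · exact Or.inl (tov h')
      · exact Or.inr (tov h')
    have hv1 : (i : ℕ) < j := hij
    have hv2 : (i' : ℕ) < j' := hij'
    have hfin : (i : ℕ) = i' ∧ (j : ℕ) = j' := by omega
    exact Prod.ext_iff.mpr ⟨Fin.ext hfin.1, Fin.ext hfin.2⟩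
  have hTfin : {p : Fin (N+1) × Fin (N+1) | p.1 < p.2}
      = ↑(Finset.univ.filter fun p : Fin (N+1) × Fin (N+1) => p.1 < p.2) := by
    ext p
    simp
  rw [← himg, Set.ncard_image_of_injOn hinj, hTfin, Set.ncard_coe_finset]
  have hcard : (Finset.univ.filter fun p : Fin (N+1) × Fin (N+1) => p.1 < p.2).card
      = ∑ i : Fin (N+1), (Finset.Ioi i).card := by
    rw [Finset.card_eq_sum_card_fiberwise (f := Prod.fst) (t := Finset.univ)
      (fun x _ => Finset.mem_univ _)]
    apply Finset.sum_congr rfl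
    intro i _
    apply Finset.card_bij (fun p _ => p.2)
    · intro p hp
      simp only [Finset.mem_filter, Finset.mem_univ, true_and] at hp
      rw [Finset.mem_Ioi, ← hp.2]
      exact hp.1
    · intro p hp q hq hpq
      simp only [Finset.mem_filter, Finset.mem_univ, true_and] at hp hq
      exact Prod.ext_iff.mpr ⟨hp.2.trans hq.2.symm, hpq⟩
    · intro q hq
      refine ⟨(i, q), ?_, rfl⟩
      simp only [Finset.mem_filter, Finset.mem_univ, true_and]
      exact ⟨Finset.mem_Ioi.mp hq, by trivial⟩
  rw [hcard]
  have hIoi : ∀ i : Fin (N+1), (Finset.Ioi i).card = N - (i : ℕ) := by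
    intro i
    rw [Fin.card_Ioi]
    omega
  rw [Finset.sum_congr rfl (fun i _ => hIoi i),
    Fin.sum_univ_eq_sum_range (fun k => N - k) (N+1)]
  have hrefl := Finset.sum_range_reflect (fun k => k) (N+1)
  simp only [Nat.add_sub_cancel] at hrefl
  have hg := Finset.sum_range_id_mul_two (N+1)
  simp only [Nat.add_sub_cancel] at hg
  rw [show N * (N+1) = (N+1) * N from Nat.mul_comm _ _]
  omega

lemma main (N d : ℕ) (hd : 2 ≤ d) :
    (P N d).ncard = N * (N + 1) / 2 * (N + 1) ^ (d - 2) := by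
  induction d, hd using Nat.le_induction with
  | base => simpa using base
  | succ d hd ih =>
    rw [step hd, ih, show d + 1 - 2 = (d - 2) + 1 by omega, pow_succ]
    ring

end Stmt11

/-- For `N ≥ 1` and `d ≥ 2`, the set `Σ̄_d` of combinatorial data
`α = (α_0, …, α_N)`, where each `α_i` is either empty or a strictly increasing tuple
of naturals all `< r_0 + ⋯ + r_i` (with `r_i` the length of `α_i`), the total length
`r_0 + ⋯ + r_N` equals `d`, and there exists `i` with `α_{i,1} = 0`,
`α_{i,r_i} < r_0 + ⋯ + r_i - 1` if `r_i > 1`, and `α_{j,r_j} < r_0 + ⋯ + r_j - 1` for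
all `j > i` (vacuously if `α_j` is empty), has cardinality
`(N(N+1)/2)·(N+1)^{d-2}`. -/
theorem stmt11 (N d : ℕ) (hN : 1 ≤ N) (hd : 2 ≤ d) :
    Set.ncard {α : Fin (N + 1) → List ℕ |
        (∀ i, List.Pairwise (· < ·) (α i)) ∧
        (∀ i, ∀ x ∈ α i, x < ∑ t ∈ Finset.Iic i, (α t).length) ∧
        (∑ i, (α i).length = d) ∧
        (∃ i : Fin (N + 1),
          (α i).head? = some 0 ∧
          (1 < (α i).length →
            ∀ x : ℕ, (α i).getLast? = some x → x + 1 < ∑ t ∈ Finset.Iic i, (α t).length) ∧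
          (∀ j : Fin (N + 1), i < j →
            ∀ x : ℕ, (α j).getLast? = some x → x + 1 < ∑ t ∈ Finset.Iic j, (α t).length))}
      = N * (N + 1) / 2 * (N + 1) ^ (d - 2) := by
  exact Stmt11.main N d hd
end

section
/- Let q, r, k, d ∈ ℕ with d = q(k+1) + r, 0 ≤ r ≤ k. In ℂ[Z_1,...,Z_d], let I_k be the ideal generated by the symmetric polynomials of positive degree together with Z_1^{k+1},...,Z_d^{k+1}. Then modulo I_k, the polynomial ∏_{i=1}^{d-1}(1 - t Z_i) is congruent to Σ_{i=0}^{d-1} t^i Z_d^i (as polynomials in t with coefficients in ℂ[Z_1,...,Z_d]/I_k). -/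
open MvPolynomial

noncomputable section

/-- The ideal `I_k ⊆ ℂ[Z_1, …, Z_d]` generated by the symmetric polynomials of positive
degree (equivalently, with zero constant term) together with `Z_1^{k+1}, …, Z_d^{k+1}`. -/
def Ik (d k : ℕ) : Ideal (MvPolynomial (Fin d) ℂ) :=
  Ideal.span ({P : MvPolynomial (Fin d) ℂ | P.IsSymmetric ∧ constantCoeff P = 0}
    ∪ Set.range (fun i : Fin d => (X i) ^ (k + 1)))

theorem prodExpand {R σ : Type*} [CommRing R] [Fintype σ] [DecidableEq σ] (a : σ → R) :
    ∏ i : σ, (1 - Polynomial.C (a i) * Polynomial.X) =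
      ∑ j ∈ Finset.range (Fintype.card σ + 1),
        Polynomial.C ((-1)^j * ∑ t ∈ Finset.univ.powersetCard j, ∏ i ∈ t, a i)
          * Polynomial.X ^ j := by
  have h : ∀ i : σ, 1 - Polynomial.C (a i) * Polynomial.X
      = -(Polynomial.C (a i) * Polynomial.X) + 1 := fun i => by ring
  simp_rw [h]
  rw [Finset.prod_add]
  rw [Finset.sum_powerset]
  simp only [Finset.prod_const_one, mul_one, Finset.card_univ]
  refine Finset.sum_congr rfl fun j _ => ?_
  rw [map_mul, map_sum, Finset.mul_sum, Finset.sum_mul]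
  refine Finset.sum_congr rfl fun t ht => ?_
  have hc : t.card = j := (Finset.mem_powersetCard.mp ht).2
  have : ∀ i : σ, -(Polynomial.C (a i) * Polynomial.X)
      = (-1 : Polynomial R) * (Polynomial.C (a i) * Polynomial.X) := fun i => by ring
  simp_rw [this, Finset.prod_mul_distrib, Finset.prod_const, hc, map_pow, map_neg, map_one,
    map_prod]
  ring

theorem esymm_mem_Ik (d k j : ℕ) (hj : 1 ≤ j) : esymm (Fin d) ℂ j ∈ Ik d k := by
  apply Ideal.subset_span
  left
  refine ⟨esymm_isSymmetric _ _ _, ?_⟩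
  rw [esymm, map_sum]
  apply Finset.sum_eq_zero
  intro t ht
  have hc : t.card = j := (Finset.mem_powersetCard.mp ht).2
  obtain ⟨i, hi⟩ : t.Nonempty := Finset.card_pos.mp (by omega)
  rw [map_prod]
  exact Finset.prod_eq_zero hi (by simp)

/-- Let `d = q(k+1) + r` with `0 ≤ r ≤ k` (and `d ≥ 1`).  Modulo
`I_k`, the polynomial `∏_{i=1}^{d-1} (1 - t Z_i)` is congruent to
`∑_{i=0}^{d-1} t^i Z_d^i`, as polynomials in `t` with coefficients in
`ℂ[Z_1,…,Z_d]/I_k`; here `Z_d` is the last variable. -/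
theorem stmt12 (q r k d : ℕ) (hd : 1 ≤ d) (hdr : d = q * (k + 1) + r) (hr : r ≤ k) :
    ∏ i ∈ Finset.univ.filter (fun i : Fin d => i ≠ ⟨d - 1, by omega⟩),
        (1 - Polynomial.C (Ideal.Quotient.mk (Ik d k) (X i)) * Polynomial.X)
      = ∑ i ∈ Finset.range d,
          Polynomial.C (Ideal.Quotient.mk (Ik d k) ((X (⟨d - 1, by omega⟩ : Fin d)) ^ i))
            * Polynomial.X ^ i := by
  set L : Fin d := ⟨d - 1, by omega⟩ with hL
  set mk := Ideal.Quotient.mk (Ik d k) with hmk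
  set z : Fin d → MvPolynomial (Fin d) ℂ ⧸ Ik d k := fun i => mk (X i) with hz
  have hsym : ∀ j : ℕ, 1 ≤ j → mk (esymm (Fin d) ℂ j) = 0 := fun j hj =>
    (Ideal.Quotient.eq_zero_iff_mem).mpr (esymm_mem_Ik d k j hj)
  have hes : ∀ j : ℕ, (∑ t ∈ Finset.univ.powersetCard j, ∏ i ∈ t, z i)
      = mk (esymm (Fin d) ℂ j) := by
    intro j
    rw [esymm, map_sum]
    exact Finset.sum_congr rfl fun t _ => (map_prod mk _ _).symm
  -- full product is 1
  have hQ : ∏ i : Fin d, (1 - Polynomial.C (z i) * Polynomial.X) = 1 := by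
    rw [prodExpand]
    rw [Finset.sum_eq_single_of_mem 0 (Finset.mem_range.mpr (by omega))]
    · simp
    · intro j _ hj0
      rw [hes j, hsym j (by omega)]
      simp
  -- z L ^ d = 0
  have hzd : z L ^ d = 0 := by
    have hv := MvPolynomial.prod_C_add_X_eq_sum_esymm ℂ (Fin d)
    have h2 := congrArg (Polynomial.eval₂ mk (-(z L))) hv
    rw [Polynomial.eval₂_finset_prod] at h2
    simp only [Polynomial.eval₂_add, Polynomial.eval₂_X, Polynomial.eval₂_C] at h2
    rw [Finset.prod_eq_zero (Finset.mem_univ L) (neg_add_cancel (z L))] at h2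
    rw [Polynomial.eval₂_finset_sum] at h2
    simp only [Polynomial.eval₂_mul, Polynomial.eval₂_C, Polynomial.eval₂_pow,
      Polynomial.eval₂_X, Fintype.card_fin] at h2
    rw [Finset.sum_eq_single_of_mem 0 (Finset.mem_range.mpr (by omega)) (fun j _ hj0 => by
      rw [hsym j (by omega)]; simp)] at h2
    simp only [esymm_zero, map_one, one_mul, Nat.sub_zero] at h2
    have h2' : (0 : MvPolynomial (Fin d) ℂ ⧸ Ik d k) = (-(z L)) ^ d := h2
    rcases Nat.even_or_odd d with he | ho
    · exact (Even.neg_pow he (z L)).symm.trans h2'.symm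
    · have := (Odd.neg_pow ho (z L)).symm.trans h2'.symm
      exact neg_eq_zero.mp this
  -- geometric sum identity
  set u : Polynomial (MvPolynomial (Fin d) ℂ ⧸ Ik d k) :=
    1 - Polynomial.C (z L) * Polynomial.X with hu
  have hB : (∑ i ∈ Finset.range d, Polynomial.C (z L ^ i) * Polynomial.X ^ i) * u = 1 := by
    have hpow : ∀ i : ℕ, Polynomial.C (z L ^ i) * Polynomial.X ^ i
        = (Polynomial.C (z L) * Polynomial.X) ^ i := fun i => by rw [map_pow]; ring
    simp_rw [hpow]
    have := geom_sum_mul (Polynomial.C (z L) * Polynomial.X) d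
    have h3 : (∑ i ∈ Finset.range d, (Polynomial.C (z L) * Polynomial.X) ^ i) * u
        = -((Polynomial.C (z L) * Polynomial.X) ^ d - 1) := by rw [← this, hu]; ring
    have hmp : (Polynomial.C (z L) * Polynomial.X) ^ d
        = Polynomial.C (z L) ^ d * Polynomial.X ^ d := by ring
    rw [h3, hmp, ← map_pow, hzd]
    simp
  -- split full product
  have hA : (∏ i ∈ Finset.univ.filter (fun i : Fin d => i ≠ L),
      (1 - Polynomial.C (z i) * Polynomial.X)) * u = 1 := by
    have hfil : Finset.univ.filter (fun i : Fin d => ¬ i ≠ L) = {L} := by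
      ext i; simp [eq_comm]
    have hone : ∏ i ∈ Finset.univ.filter (fun i : Fin d => ¬ i ≠ L),
        (1 - Polynomial.C (z i) * Polynomial.X) = u := by
      rw [hfil, Finset.prod_singleton, hu]
    rw [← hone, Finset.prod_filter_mul_prod_filter_not]
    exact hQ
  -- combine
  have key : (∏ i ∈ Finset.univ.filter (fun i : Fin d => i ≠ L),
        (1 - Polynomial.C (z i) * Polynomial.X))
      = ∑ i ∈ Finset.range d, Polynomial.C (z L ^ i) * Polynomial.X ^ i := by
    calc (∏ i ∈ Finset.univ.filter (fun i : Fin d => i ≠ L),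
          (1 - Polynomial.C (z i) * Polynomial.X))
        = (∏ i ∈ Finset.univ.filter (fun i : Fin d => i ≠ L),
          (1 - Polynomial.C (z i) * Polynomial.X)) * 1 := (mul_one _).symm
      _ = (∏ i ∈ Finset.univ.filter (fun i : Fin d => i ≠ L),
          (1 - Polynomial.C (z i) * Polynomial.X)) *
          ((∑ i ∈ Finset.range d, Polynomial.C (z L ^ i) * Polynomial.X ^ i) * u) := by
          rw [hB]
      _ = ((∏ i ∈ Finset.univ.filter (fun i : Fin d => i ≠ L),
          (1 - Polynomial.C (z i) * Polynomial.X)) * u) *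
          (∑ i ∈ Finset.range d, Polynomial.C (z L ^ i) * Polynomial.X ^ i) := by ring
      _ = _ := by rw [hA, one_mul]
  simpa [hz, map_pow] using key
end
end

section
/- Let d ≥ 1, 0 ≤ k, and write d = q(k+1) + r with 0 ≤ r ≤ k. Let μ_k be the partition of d consisting of (k+1-r) parts equal to q and r parts equal to (q+1). Then the ideal I_k ⊆ ℂ[Z_1,...,Z_d] generated by positive-degree symmetric polynomials together with Z_1^{k+1},...,Z_d^{k+1} equals the DeConcini–Procesi ideal I_{μ_k} generated by the partial elementary symmetric polynomials {e_j(S) : S ⊆ {Z_1,...,Z_d}, |S| = i, i - d_i(μ_k) < j ≤ i}, where d_i(μ) is the sum of the lengths of the last i columns of the Young diagram of μ. -/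
open MvPolynomial

noncomputable section

/-- The `j`-th partial elementary symmetric polynomial `e_j(S)` in the variables of a
subset `S` of `{Z_1, …, Z_d}` (with `e_0(S) = 1` and `e_j(S) = 0` for `j > |S|`). -/
def esymmPart (d : ℕ) (S : Finset (Fin d)) (j : ℕ) : MvPolynomial (Fin d) ℂ :=
  ∑ A ∈ Finset.powersetCard j S, ∏ i ∈ A, X i

/-- The conjugate partition `μ_k' = (0, …, 0, r, k+1, …, k+1)` (nondecreasing, padded
with zeros to `d` entries, with `q` entries equal to `k+1`) of the partition `μ_k` of
`d = q(k+1) + r` consisting of `(k+1-r)` parts equal to `q` and `r` parts `q+1`;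
`muConj d q r k t` is the entry in (0-indexed) position `t`. -/
def muConj (d q r k : ℕ) : ℕ → ℕ := fun t =>
  if t + q + 1 < d then 0 else if t + q + 1 = d then r else k + 1

/-- `d_i(μ_k) = μ_1' + ⋯ + μ_i'`, the sum of the lengths of the last `i` columns of the
Young diagram of `μ_k`. -/
def dsub (d q r k : ℕ) (i : ℕ) : ℕ := ∑ t ∈ Finset.range i, muConj d q r k t

/-- The DeConcini–Procesi ideal `I_{μ_k}`, generated by the partial elementary symmetric
polynomials `e_j(S)` for `S ⊆ {Z_1, …, Z_d}` with `|S| = i` and `i - d_i(μ_k) < j ≤ i`. -/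
def Idcp (d q r k : ℕ) : Ideal (MvPolynomial (Fin d) ℂ) :=
  Ideal.span {P : MvPolynomial (Fin d) ℂ | ∃ (S : Finset (Fin d)) (j : ℕ),
    S.card - dsub d q r k S.card < j ∧ j ≤ S.card ∧ P = esymmPart d S j}

/-! ### Auxiliary lemmas -/

lemma esymmPart_zero_eq_one (d : ℕ) (S : Finset (Fin d)) : esymmPart d S 0 = 1 := by
  simp [_root_.esymmPart]

lemma esymmPart_eq_zero {d : ℕ} {S : Finset (Fin d)} {j : ℕ} (h : S.card < j) :
    esymmPart d S j = 0 := by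
  simp [_root_.esymmPart, Finset.powersetCard_eq_empty.mpr h]

lemma esymmPart_univ (d j : ℕ) : esymmPart d Finset.univ j = esymm (Fin d) ℂ j := rfl

lemma constantCoeff_esymmPart {d : ℕ} (S : Finset (Fin d)) {j : ℕ} (hj : 1 ≤ j) :
    constantCoeff (esymmPart d S j) = 0 := by
  rw [_root_.esymmPart, map_sum]
  refine Finset.sum_eq_zero fun A hA => ?_
  rw [map_prod]
  obtain ⟨a, ha⟩ : A.Nonempty := by
    rw [← Finset.card_pos]
    rw [Finset.mem_powersetCard] at hA
    omega
  exact Finset.prod_eq_zero ha (constantCoeff_X (R := ℂ) a)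

lemma esymmPart_insert {d : ℕ} {S : Finset (Fin d)} {z : Fin d} (hz : z ∉ S) (j : ℕ) :
    esymmPart d (insert z S) (j + 1) = esymmPart d S (j + 1) + X z * esymmPart d S j := by
  unfold _root_.esymmPart
  rw [Finset.powersetCard_succ_insert hz, Finset.sum_union, Finset.sum_image, Finset.mul_sum]
  · congr 1
    refine Finset.sum_congr rfl fun A hA => ?_
    rw [Finset.mem_powersetCard] at hA
    rw [Finset.prod_insert (fun h => hz (hA.1 h))]
  · intro A hA B hB hAB
    rw [Finset.mem_coe, Finset.mem_powersetCard] at hA hB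
    have hzA : z ∉ A := fun h => hz (hA.1 h)
    have hzB : z ∉ B := fun h => hz (hB.1 h)
    rw [← Finset.erase_insert hzA, ← Finset.erase_insert hzB, hAB]
  · rw [Finset.disjoint_left]
    intro A hA hA'
    rw [Finset.mem_powersetCard] at hA
    rw [Finset.mem_image] at hA'
    obtain ⟨B, _, rfl⟩ := hA'
    exact hz (hA.1 (Finset.mem_insert_self z B))

lemma esymmPart_telescope {d : ℕ} {S : Finset (Fin d)} {z : Fin d} (hz : z ∉ S) :
    ∀ M j, M + 1 ≤ j →
      esymmPart d S j =
        (∑ m ∈ Finset.range (M + 1), (-X z) ^ m * esymmPart d (insert z S) (j - m))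
          + (-X z) ^ (M + 1) * esymmPart d S (j - (M + 1)) := by
  intro M
  induction M with
  | zero =>
    intro j hj
    obtain ⟨j', rfl⟩ : ∃ j', j = j' + 1 := ⟨j - 1, by omega⟩
    have h := esymmPart_insert hz j'
    simp only [zero_add, Finset.sum_range_one, pow_zero, one_mul, pow_one,
      Nat.sub_zero, Nat.add_sub_cancel]
    linear_combination -h
  | succ M ih =>
    intro j hj
    have e3 : M + 1 + 1 = M + 2 := by omega
    rw [e3] at *
    rw [ih j (by omega)]
    have e1 : j - (M + 1) = (j - (M + 2)) + 1 := by omega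
    have h := esymmPart_insert hz (j - (M + 2))
    rw [← e1] at h
    rw [Finset.sum_range_succ _ (M + 1), h]
    ring

lemma dsub_formula {d q r k : ℕ} (hdr : d = q * (k + 1) + r) (i : ℕ) :
    dsub d q r k i = if d ≤ i + q then r + (i + q - d) * (k + 1) else 0 := by
  have hq : q * (k + 1) = q * k + q := by ring
  induction i with
  | zero =>
    simp only [dsub, Finset.range_zero, Finset.sum_empty, zero_add]
    split
    · have h1 : q - d = 0 := by omega
      have h2 : r = 0 := by omega
      rw [h1, h2]; simp
    · rfl
  | succ i ih =>
    rw [dsub, Finset.sum_range_succ, ← dsub, ih]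
    unfold muConj
    by_cases h1 : i + q + 1 < d
    · rw [if_pos h1, if_neg (by omega), if_neg (by omega)]
    · by_cases h2 : i + q + 1 = d
      · rw [if_neg h1, if_pos h2, if_neg (by omega), if_pos (by omega)]
        have : i + 1 + q - d = 0 := by omega
        rw [this]; ring
      · rw [if_neg h1, if_neg h2, if_pos (by omega), if_pos (by omega)]
        have e1 : i + 1 + q - d = (i + q - d) + 1 := by omega
        rw [e1]; ring

lemma key_ineq {d q r k i j : ℕ} (hdr : d = q * (k + 1) + r)
    (hi : i ≤ d) (h1 : i - dsub d q r k i < j) (h2 : j ≤ i) : (d - i) * k < j := by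
  rw [dsub_formula hdr] at h1
  by_cases hc : d ≤ i + q
  · rw [if_pos hc] at h1
    have hs : d - i ≤ q := by omega
    have e1 : i + q - d = q - (d - i) := by omega
    rw [e1] at h1
    have e2 : q * (k + 1) = (q - (d - i)) * (k + 1) + (d - i) * k + (d - i) := by
      have : q = (q - (d - i)) + (d - i) := by omega
      nth_rewrite 1 [this]
      ring
    omega
  · rw [if_neg hc] at h1
    omega

/-- Reverse inclusion workhorse: every DeConcini–Procesi generator lies in `I_k`. -/
lemma esymmPart_mem_Ik {d k : ℕ} : ∀ (n : ℕ) (S : Finset (Fin d)) (j : ℕ),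
    d = S.card + n → (d - S.card) * k < j → j ≤ S.card →
    esymmPart d S j ∈ Ik d k := by
  intro n
  induction n with
  | zero =>
    intro S j hcard hj1 hj2
    have hS : S = Finset.univ := Finset.eq_univ_of_card S (by rw [Fintype.card_fin]; omega)
    subst hS
    have hj : 1 ≤ j := by omega
    refine Ideal.subset_span (Or.inl ⟨?_, constantCoeff_esymmPart _ hj⟩)
    rw [esymmPart_univ]
    exact esymm_isSymmetric (Fin d) ℂ j
  | succ n ih =>
    intro S j hcard hj1 hj2
    have hne : Sᶜ.Nonempty := by
      rw [← Finset.card_pos, Finset.card_compl, Fintype.card_fin]; omega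
    obtain ⟨z, hzc⟩ := hne
    have hz : z ∉ S := Finset.mem_compl.mp hzc
    have hds : d - S.card = n + 1 := by omega
    rw [hds] at hj1
    have hnk : (n + 1) * k = n * k + k := by ring
    have hjk : k + 1 ≤ j := by omega
    rw [esymmPart_telescope hz k j hjk]
    apply Ideal.add_mem
    · apply Ideal.sum_mem
      intro m hm
      rw [Finset.mem_range] at hm
      apply Ideal.mul_mem_left
      apply ih (insert z S) (j - m)
      · rw [Finset.card_insert_of_notMem hz]; omega
      · rw [Finset.card_insert_of_notMem hz]
        have : d - (S.card + 1) = n := by omega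
        rw [this]; omega
      · rw [Finset.card_insert_of_notMem hz]; omega
    · have hXz : (X z : MvPolynomial (Fin d) ℂ) ^ (k + 1) ∈ Ik d k :=
        Ideal.subset_span (Or.inr ⟨z, rfl⟩)
      have he : (-X z : MvPolynomial (Fin d) ℂ) ^ (k + 1) * esymmPart d S (j - (k + 1))
          = ((-1) ^ (k + 1) * esymmPart d S (j - (k + 1))) * (X z) ^ (k + 1) := by
        ring
      rw [he]
      exact Ideal.mul_mem_left _ _ hXz

lemma dsub_self {d q r k : ℕ} (hdr : d = q * (k + 1) + r) : dsub d q r k d = d := by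
  rw [dsub_formula hdr, if_pos (by omega)]
  have : d + q - d = q := by omega
  rw [this]; omega

lemma esymm_mem_Idcp {d q r k j : ℕ} (hdr : d = q * (k + 1) + r) (hj : 1 ≤ j) :
    esymm (Fin d) ℂ j ∈ Idcp d q r k := by
  by_cases hjd : j ≤ d
  · refine Ideal.subset_span ⟨Finset.univ, j, ?_, ?_, (esymmPart_univ d j).symm⟩
    · rw [Finset.card_univ, Fintype.card_fin, dsub_self hdr]; omega
    · rw [Finset.card_univ, Fintype.card_fin]; exact hjd
  · rw [← esymmPart_univ, esymmPart_eq_zero (by rw [Finset.card_univ, Fintype.card_fin]; omega)]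
    exact Ideal.zero_mem _

lemma symmetric_mem_Idcp {d q r k : ℕ} (hdr : d = q * (k + 1) + r)
    {P : MvPolynomial (Fin d) ℂ} (hsym : P.IsSymmetric) (hcc : constantCoeff P = 0) :
    P ∈ Idcp d q r k := by
  obtain ⟨p, hp⟩ := esymmAlgHom_surjective (σ := Fin d) (n := d) ℂ
    (by rw [Fintype.card_fin]) ⟨P, hsym⟩
  have hP : aeval (fun i : Fin d => esymm (Fin d) ℂ (i + 1)) p = P := by
    have := esymmAlgHom_apply (σ := Fin d) (R := ℂ) (n := d) p
    rw [hp] at this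
    exact this.symm
  have key : ∀ p : MvPolynomial (Fin d) ℂ, ∃ c : ℂ,
      aeval (fun i : Fin d => esymm (Fin d) ℂ (i + 1)) p - C c ∈ Idcp d q r k := by
    intro p
    induction p using MvPolynomial.induction_on with
    | C a =>
      exact ⟨a, by rw [aeval_C, algebraMap_eq, sub_self]; exact Ideal.zero_mem _⟩
    | add p₁ p₂ h₁ h₂ =>
      obtain ⟨c₁, h₁⟩ := h₁
      obtain ⟨c₂, h₂⟩ := h₂
      refine ⟨c₁ + c₂, ?_⟩
      have : aeval (fun i : Fin d => esymm (Fin d) ℂ (i + 1)) (p₁ + p₂) - C (c₁ + c₂)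
          = (aeval (fun i : Fin d => esymm (Fin d) ℂ (i + 1)) p₁ - C c₁)
            + (aeval (fun i : Fin d => esymm (Fin d) ℂ (i + 1)) p₂ - C c₂) := by
        rw [map_add, C_add]; ring
      rw [this]
      exact Ideal.add_mem _ h₁ h₂
    | mul_X p₁ i h₁ =>
      refine ⟨0, ?_⟩
      rw [map_mul, aeval_X, map_zero, sub_zero]
      exact Ideal.mul_mem_left _ _ (esymm_mem_Idcp hdr (by omega))
  obtain ⟨c, hc⟩ := key p
  rw [hP] at hc
  have hker : Idcp d q r k ≤ RingHom.ker (constantCoeff (R := ℂ) (σ := Fin d)) := by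
    rw [Idcp, Ideal.span_le]
    rintro _ ⟨S, j, hj1, hj2, rfl⟩
    exact RingHom.mem_ker.mpr (constantCoeff_esymmPart S (by omega))
  have h0 : constantCoeff (P - C c) = 0 := RingHom.mem_ker.mp (hker hc)
  rw [map_sub, hcc, constantCoeff_C] at h0
  have : c = 0 := by
    have := h0; simp at this; exact this
  rw [this, map_zero, sub_zero] at hc
  exact hc

lemma fident {d : ℕ} (z : Fin d) : ∀ m : ℕ,
    ∑ j ∈ Finset.range (m + 1),
        (-1 : MvPolynomial (Fin d) ℂ) ^ j * esymmPart d Finset.univ j * (X z) ^ (m - j)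
      = (-1) ^ m * esymmPart d (Finset.univ.erase z) m := by
  intro m
  induction m with
  | zero => simp [esymmPart_zero_eq_one]
  | succ m ih =>
    rw [Finset.sum_range_succ]
    have hsum : ∑ j ∈ Finset.range (m + 1),
        (-1 : MvPolynomial (Fin d) ℂ) ^ j * esymmPart d Finset.univ j * (X z) ^ (m + 1 - j)
        = X z * ∑ j ∈ Finset.range (m + 1),
            (-1) ^ j * esymmPart d Finset.univ j * (X z) ^ (m - j) := by
      rw [Finset.mul_sum]
      refine Finset.sum_congr rfl fun j hj => ?_
      rw [Finset.mem_range] at hj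
      have : m + 1 - j = (m - j) + 1 := by omega
      rw [this]; ring
    rw [hsum, ih]
    have hins := esymmPart_insert (S := Finset.univ.erase z) (z := z)
      (Finset.notMem_erase z _) m
    rw [Finset.insert_erase (Finset.mem_univ z)] at hins
    have hz0 : m + 1 - (m + 1) = 0 := by omega
    rw [hz0, hins, pow_zero]
    ring

lemma Xpow_mem_Idcp {d q r k : ℕ} (hdr : d = q * (k + 1) + r) (hr : r ≤ k) (hd : 1 ≤ d)
    (z : Fin d) : (X z : MvPolynomial (Fin d) ℂ) ^ (k + 1) ∈ Idcp d q r k := by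
  have hfid := fident z (k + 1)
  rw [Finset.sum_range_succ'] at hfid
  simp only [pow_zero, one_mul, esymmPart_zero_eq_one, Nat.sub_zero, mul_one] at hfid
  have hT : esymmPart d (Finset.univ.erase z) (k + 1) ∈ Idcp d q r k := by
    have hcard : (Finset.univ.erase z).card = d - 1 := by
      rw [Finset.card_erase_of_mem (Finset.mem_univ z), Finset.card_univ, Fintype.card_fin]
    by_cases hkd : k + 1 ≤ d - 1
    · have hq1 : 1 ≤ q := by
        rcases Nat.eq_zero_or_pos q with h | h
        · subst h; omega
        · exact h
      refine Ideal.subset_span ⟨Finset.univ.erase z, k + 1, ?_, ?_, rfl⟩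
      · rw [hcard, dsub_formula hdr, if_pos (by omega)]
        have e1 : d - 1 + q - d = q - 1 := by omega
        rw [e1]
        have e2 : q * (k + 1) = (q - 1) * (k + 1) + (k + 1) := by
          have : q = (q - 1) + 1 := by omega
          nth_rewrite 1 [this]; ring
        omega
      · rw [hcard]; exact hkd
    · rw [esymmPart_eq_zero (by omega)]
      exact Ideal.zero_mem _
  have hXz : (X z : MvPolynomial (Fin d) ℂ) ^ (k + 1)
      = (-1) ^ (k + 1) * esymmPart d (Finset.univ.erase z) (k + 1)
        - ∑ j ∈ Finset.range (k + 1),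
            (-1 : MvPolynomial (Fin d) ℂ) ^ (j + 1) * esymmPart d Finset.univ (j + 1)
              * (X z) ^ (k + 1 - (j + 1)) := by
    linear_combination hfid
  rw [hXz]
  apply Ideal.sub_mem
  · exact Ideal.mul_mem_left _ _ hT
  · apply Ideal.sum_mem
    intro j hj
    have he : (-1 : MvPolynomial (Fin d) ℂ) ^ (j + 1) * esymmPart d Finset.univ (j + 1)
        * (X z) ^ (k + 1 - (j + 1))
        = ((-1) ^ (j + 1) * (X z) ^ (k + 1 - (j + 1))) * esymmPart d Finset.univ (j + 1) := by
      ring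
    rw [he]
    exact Ideal.mul_mem_left _ _ (by rw [esymmPart_univ]; exact esymm_mem_Idcp hdr (by omega))

/-- For `d = q(k+1) + r`, `0 ≤ r ≤ k` (and `d ≥ 1`), the ideal `I_k`
equals the DeConcini–Procesi ideal `I_{μ_k}` associated to the partition `μ_k`. -/
theorem stmt13 (q r k d : ℕ) (hd : 1 ≤ d) (hdr : d = q * (k + 1) + r) (hr : r ≤ k) :
    Ik d k = Idcp d q r k := by
  apply le_antisymm
  · rw [Ik, Ideal.span_le]
    rintro P (⟨hsym, hcc⟩ | ⟨i, rfl⟩)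
    · exact symmetric_mem_Idcp hdr hsym hcc
    · exact Xpow_mem_Idcp hdr hr hd i
  · rw [Idcp, Ideal.span_le]
    rintro _ ⟨S, j, h1, h2, rfl⟩
    have hSd : S.card ≤ d := by
      have := Finset.card_le_univ S
      rwa [Fintype.card_fin] at this
    exact esymmPart_mem_Ik (d - S.card) S j (by omega) (key_ineq hdr hSd h1 h2) h2
end
end
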